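/- arXiv:2007.05145 — 7 statements merged into one kernel-verified Lean document; each statement's English description precedes it below -/
import Mathlib

section
/- Let P and Q be probability distributions on a countable set X and let ε > 0. Define S* := {x ∈ X : Q({x}) ≤ P({x})/ε}. Then for every subset S ⊆ X with rej_P(S) ≤ rej_P(S*), it holds that rej_Q(S) ≤ rej_Q(S*). -/
/-!
Neyman–Pearson: on a countable space, `μ A - ν A` is maximised by any set `T` on which `μ` dominates
`ν` pointwise and outside of which `ν` dominates `μ`. Taking `μ = ε Q`, `ν = P`, `T = S*ᶜ` and
`A = Sᶜ` gives `ε (rej_Q S - rej_Q S*) ≤ rej_P S - rej_P S* ≤ 0`.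
-/

open MeasureTheory

namespace MeasureTheory.Measure

variable {X : Type*} [Countable X] [MeasurableSpace X] [MeasurableSingletonClass X]

theorem apply_le_apply_of_forall_singleton_le {μ ν : Measure X} {B : Set X}
    (h : ∀ x ∈ B, μ {x} ≤ ν {x}) : μ B ≤ ν B := by
  have hB : MeasurableSet B := B.to_countable.measurableSet
  rw [← tsum_indicator_apply_singleton μ B hB, ← tsum_indicator_apply_singleton ν B hB]
  refine ENNReal.tsum_le_tsum fun x => ?_
  by_cases hx : x ∈ B <;> simp [hx, h]

/-- `μ A - ν A ≤ μ T - ν T`, stated without subtraction. -/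
theorem add_apply_le_add_apply_of_singleton {μ ν : Measure X} {T : Set X}
    (hT : ∀ x ∈ T, ν {x} ≤ μ {x}) (hTc : ∀ x ∉ T, μ {x} ≤ ν {x}) (A : Set X) :
    μ A + ν T ≤ μ T + ν A := by
  have hT_meas : MeasurableSet T := T.to_countable.measurableSet
  have hA_meas : MeasurableSet A := A.to_countable.measurableSet
  have hout : μ (A \ T) ≤ ν (A \ T) :=
    apply_le_apply_of_forall_singleton_le fun x hx => hTc x hx.2
  have hin : ν (T \ A) ≤ μ (T \ A) :=
    apply_le_apply_of_forall_singleton_le fun x hx => hT x hx.1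
  rw [← measure_inter_add_sdiff A hT_meas, ← measure_inter_add_sdiff T hA_meas (μ := μ),
    ← measure_inter_add_sdiff A hT_meas (μ := ν), ← measure_inter_add_sdiff T hA_meas (μ := ν),
    Set.inter_comm T A]
  calc μ (A ∩ T) + μ (A \ T) + (ν (A ∩ T) + ν (T \ A))
      ≤ μ (A ∩ T) + ν (A \ T) + (ν (A ∩ T) + μ (T \ A)) := by gcongr
    _ = μ (A ∩ T) + μ (T \ A) + (ν (A ∩ T) + ν (A \ T)) := by ring

end MeasureTheory.Measure

/-- Let `P`, `Q` be probability distributions on a countable set `X`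
and `ε > 0`. Define `S* = {x | Q({x}) ≤ P({x})/ε}`. Then for every `S ⊆ X` with
`rej_P(S) ≤ rej_P(S*)` it holds that `rej_Q(S) ≤ rej_Q(S*)`. -/
theorem stmt2 {X : Type*} [Countable X] [MeasurableSpace X] [MeasurableSingletonClass X]
    (P Q : Measure X) [IsProbabilityMeasure P] [IsProbabilityMeasure Q]
    (ε : ℝ) (hε : 0 < ε)
    (Sstar : Set X) (hSstar : Sstar = {a : X | (Q {a}).toReal ≤ (P {a}).toReal / ε})
    (S : Set X) (hS : (P Sᶜ).toReal ≤ (P Sstarᶜ).toReal) :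
    (Q Sᶜ).toReal ≤ (Q Sstarᶜ).toReal := by
  have hmem (x : X) : x ∈ Sstar ↔ ENNReal.ofReal ε * Q {x} ≤ P {x} := by
    rw [hSstar, Set.mem_ofPred_eq, le_div_iff₀ hε, ← ENNReal.toReal_le_toReal (by finiteness)
      (by finiteness), ENNReal.toReal_mul, ENNReal.toReal_ofReal hε.le, mul_comm]
  have key := Measure.add_apply_le_add_apply_of_singleton (μ := ENNReal.ofReal ε • Q) (ν := P)
    (T := Sstarᶜ) (fun x hx => (not_le.mp ((hmem x).not.mp hx)).le)
    (fun x hx => (hmem x).mp (not_not.mp hx)) Sᶜ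
  rw [Measure.smul_apply, Measure.smul_apply, smul_eq_mul, smul_eq_mul,
    ← ENNReal.toReal_le_toReal (by finiteness) (by finiteness),
    ENNReal.toReal_add (by finiteness) (by finiteness),
    ENNReal.toReal_add (by finiteness) (by finiteness), ENNReal.toReal_mul, ENNReal.toReal_mul,
    ENNReal.toReal_ofReal hε.le] at key
  exact le_of_mul_le_mul_left (by linarith) hε
end

section
/- For any n ∈ ℕ, any probability distribution P on a countable domain X, any family G of binary classifiers g : X → {0,1}, and any ε > 0: the probability over independent samples x ∼ P^n and z ∼ P^n that there exists g ∈ G with (1/n)·Σ_{i∈[n]} g(x_i) = 0 and (1/n)·Σ_{i∈[n]} g(z_i) ≥ ε is at most Π_G[2n]·2^{−εn}. -/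
/-!
Symmetrization. Exchanging `x i` and `z i` on any set `σ` of coordinates preserves the law of the
double sample, so the probability of the event is its average over all `2 ^ n` swaps, and it
suffices to count, for one fixed double sample, the swaps that land in the event. Only the at most
`Π_G[2n]` labellings of the `2n` sample points matter. For a fixed labelling `(a, b)`, a swap that
makes the first half vanish is forced wherever `a i ≠ b i`, and the second half can only be true
there; so there are at least `εn` such coordinates and at most `2 ^ (n - εn)` such swaps.
-/

open MeasureTheory

/-- The growth function `Π_G[m]`: the maximum, over `w ∈ X^m`, of the number of
distinct label vectors `(g(w_1),…,g(w_m))` as `g` ranges over `G`. -/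
noncomputable def growth {X : Type*} (G : Set (X → Bool)) (m : ℕ) : ℕ :=
  ⨆ w : Fin m → X, Set.ncard {v : Fin m → Bool | ∃ g ∈ G, v = fun i => g (w i)}

open Finset
open scoped ENNReal

theorem measure_le_of_card_filter_le {Ω S : Type*} [MeasurableSpace Ω] [Fintype S]
    [Nonempty S] {ν : Measure Ω} [IsProbabilityMeasure ν] {T : S → Ω → Ω}
    (hT : ∀ s, MeasurePreserving (T s) ν ν) {A : Set Ω} (hA : MeasurableSet A)
    [DecidablePred (· ∈ A)] {c : ℝ≥0∞}
    (hc : ∀ ω, (#{s | T s ω ∈ A} : ℝ≥0∞) ≤ Fintype.card S * c) : ν A ≤ c := by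
  have hpre (s : S) : MeasurableSet (T s ⁻¹' A) := (hT s).measurable hA
  refine (ENNReal.mul_le_mul_iff_right (Nat.cast_ne_zero.2 (Fintype.card_ne_zero (α := S)))
    (ENNReal.natCast_ne_top _)).1 ?_
  calc Fintype.card S * ν A = ∑ s, ν (T s ⁻¹' A) := by
        simp [(hT _).measure_preimage hA.nullMeasurableSet]
    _ = ∑ s, ∫⁻ ω, (T s ⁻¹' A).indicator 1 ω ∂ν := by
        simp [lintegral_indicator_one (hpre _)]
    _ = ∫⁻ ω, ∑ s, (T s ⁻¹' A).indicator 1 ω ∂ν :=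
        (lintegral_finsetSum _ fun s _ => measurable_one.indicator (hpre s)).symm
    _ = ∫⁻ ω, (#{s | T s ω ∈ A} : ℝ≥0∞) ∂ν := by
        refine lintegral_congr fun ω => ?_
        rw [card_filter, Nat.cast_sum]
        refine sum_congr rfl fun s _ => ?_
        by_cases h : T s ω ∈ A <;> simp [h]
    _ ≤ ∫⁻ _, Fintype.card S * c ∂ν := lintegral_mono hc
    _ = Fintype.card S * c := by simp

def swapCoords {ι α : Type*} (σ : ι → Bool) (ω : (ι → α) × (ι → α)) : (ι → α) × (ι → α) :=
  (fun i => if σ i then ω.2 i else ω.1 i, fun i => if σ i then ω.1 i else ω.2 i)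

theorem swapCoords_comp {ι α β : Type*} (f : α → β) (σ : ι → Bool) (ω : (ι → α) × (ι → α)) :
    swapCoords σ (f ∘ ω.1, f ∘ ω.2) = (f ∘ (swapCoords σ ω).1, f ∘ (swapCoords σ ω).2) := by
  ext i <;> simp [swapCoords, apply_ite f]

theorem measurePreserving_swapCoords {ι α : Type*} [Fintype ι] [MeasurableSpace α]
    (μ : Measure α) [SigmaFinite μ] (σ : ι → Bool) :
    MeasurePreserving (swapCoords σ) ((Measure.pi fun _ : ι => μ).prod (Measure.pi fun _ => μ))
      ((Measure.pi fun _ : ι => μ).prod (Measure.pi fun _ => μ)) := by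
  let e := MeasurableEquiv.arrowProdEquivProdArrow α α ι
  have he : MeasurePreserving e (.pi fun _ => μ.prod μ) _ :=
    measurePreserving_arrowProdEquivProdArrow α α ι (fun _ => μ) (fun _ => μ)
  have hflip : MeasurePreserving
      (fun (p : ι → α × α) i => (if σ i then Prod.swap else id) (p i))
      (.pi fun _ => μ.prod μ) (.pi fun _ => μ.prod μ) := by
    refine measurePreserving_pi _ _ fun i => ?_
    cases σ i
    · exact MeasurePreserving.id _
    · exact Measure.measurePreserving_swap
  convert he.comp (hflip.comp he.symm) using 1
  ext ω i <;> by_cases h : σ i <;>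
    simp [swapCoords, e, h, MeasurableEquiv.arrowProdEquivProdArrow, Equiv.arrowProdEquivProdArrow]

theorem card_swapCoords_vanishing_le {ι : Type*} [Fintype ι] [DecidableEq ι] (a b : ι → Bool)
    (t : ℝ) :
    (#{σ | (∀ i, (swapCoords σ (a, b)).1 i = false) ∧
        t ≤ {i | (swapCoords σ (a, b)).2 i = true}.ncard} : ℝ) ≤
      2 ^ Fintype.card ι * 2 ^ (-t) := by
  set S := ({σ | (∀ i, (swapCoords σ (a, b)).1 i = false) ∧
        t ≤ {i | (swapCoords σ (a, b)).2 i = true}.ncard} : Finset (ι → Bool))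
  have hswap : ∀ s x y : Bool, (if s then y else x) = false →
      (x ≠ y → s = x) ∧ ((if s then x else y) = true → x ≠ y) := by decide
  have hS : S ⊆ Fintype.piFinset fun i => if a i = b i then univ else {a i} := by
    intro σ hσ
    simp only [S, mem_filter, mem_univ, true_and] at hσ
    simp only [Fintype.mem_piFinset]
    intro i
    split_ifs with h
    · exact mem_univ _
    · exact mem_singleton.2 ((hswap _ _ _ (hσ.1 i)).1 h)
  have hcard : #(Fintype.piFinset fun i => if a i = b i then univ else {a i}) =
      2 ^ {i | a i = b i}.ncard := by
    simp only [Fintype.card_piFinset, apply_ite card, card_univ, Fintype.card_bool, card_singleton]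
    rw [prod_ite, prod_const, prod_const, one_pow, mul_one, ← Set.ncard_coe_finset, coe_filter]
    simp only [mem_univ, true_and]
  have hsplit : {i | a i = b i}.ncard + {i | a i ≠ b i}.ncard = Fintype.card ι := by
    rw [← Nat.card_eq_fintype_card, ← Set.ncard_add_ncard_compl {i | a i = b i}]
    rfl
  rcases S.eq_empty_or_nonempty with hempty | ⟨σ, hσ⟩
  · rw [hempty, card_empty, Nat.cast_zero]
    positivity
  simp only [S, mem_filter, mem_univ, true_and] at hσ
  have ht : t ≤ {i | a i ≠ b i}.ncard :=
    hσ.2.trans (Nat.cast_le.2 (Set.ncard_le_ncard fun i hi => (hswap _ _ _ (hσ.1 i)).2 hi))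
  calc (#S : ℝ) ≤ (2 : ℝ) ^ {i | a i = b i}.ncard := by exact_mod_cast hcard ▸ card_le_card hS
    _ = 2 ^ ((Fintype.card ι : ℝ) - {i | a i ≠ b i}.ncard) := by
      rw [← hsplit, ← Real.rpow_natCast]
      push_cast
      ring_nf
    _ ≤ 2 ^ ((Fintype.card ι : ℝ) - t) := by gcongr; norm_num
    _ = 2 ^ Fintype.card ι * 2 ^ (-t) := by
      rw [sub_eq_add_neg, Real.rpow_add two_pos, Real.rpow_natCast]

theorem ncard_patterns_le_growth {X : Type*} (G : Set (X → Bool)) {m : ℕ} (w : Fin m → X) :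
    {v : Fin m → Bool | ∃ g ∈ G, v = fun i => g (w i)}.ncard ≤ growth G m :=
  le_ciSup (f := fun w : Fin m → X => {v : Fin m → Bool | ∃ g ∈ G, v = fun i => g (w i)}.ncard)
    ⟨Nat.card (Fin m → Bool), by rintro _ ⟨w, rfl⟩; exact Set.ncard_le_card _⟩ w

theorem ncard_patternPairs_le_growth {X : Type*} (G : Set (X → Bool)) {m k : ℕ}
    (x : Fin m → X) (z : Fin k → X) :
    {p : (Fin m → Bool) × (Fin k → Bool) | ∃ g ∈ G, p = (g ∘ x, g ∘ z)}.ncard ≤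
      growth G (m + k) := by
  set split := fun v : Fin (m + k) → Bool => (v ∘ Fin.castAdd k, v ∘ Fin.natAdd m)
  calc _ ≤ (split '' {v | ∃ g ∈ G, v = fun i => g (Fin.append x z i)}).ncard := by
        refine Set.ncard_le_ncard ?_ (Set.toFinite _)
        rintro _ ⟨g, hg, rfl⟩
        refine ⟨_, ⟨g, hg, rfl⟩, ?_⟩
        ext i <;> simp [split]
    _ ≤ _ := Set.ncard_image_le (Set.toFinite _)
    _ ≤ _ := ncard_patterns_le_growth G _

def gapEvent {ι X : Type*} (G : Set (X → Bool)) (t : ℝ) : Set ((ι → X) × (ι → X)) :=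
  {ω | ∃ g ∈ G, (∀ i, g (ω.1 i) = false) ∧ t ≤ {i | g (ω.2 i) = true}.ncard}

open Classical in
theorem card_swapCoords_mem_gapEvent_le {X : Type*} (G : Set (X → Bool)) (t : ℝ) {n : ℕ}
    (x z : Fin n → X) :
    (#{σ | swapCoords σ (x, z) ∈ gapEvent G t} : ℝ) ≤ 2 ^ n * (growth G (2 * n) * 2 ^ (-t)) := by
  set L := {p : (Fin n → Bool) × (Fin n → Bool) | ∃ g ∈ G, p = (g ∘ x, g ∘ z)}
  have hL : L.ncard ≤ growth G (2 * n) := two_mul n ▸ ncard_patternPairs_le_growth G x z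
  set good : (Fin n → Bool) × (Fin n → Bool) → Finset (Fin n → Bool) := fun p =>
    {σ | (∀ i, (swapCoords σ p).1 i = false) ∧ t ≤ {i | (swapCoords σ p).2 i = true}.ncard}
  have hsub : ({σ | swapCoords σ (x, z) ∈ gapEvent G t} : Finset (Fin n → Bool)) ⊆
      (Set.toFinite L).toFinset.biUnion good := by
    intro σ hσ
    obtain ⟨g, hg, hvanish, hgap⟩ := (mem_filter.1 hσ).2
    refine mem_biUnion.2 ⟨(g ∘ x, g ∘ z), (Set.toFinite L).mem_toFinset.2 ⟨g, hg, rfl⟩, ?_⟩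
    simp only [good, mem_filter, mem_univ, true_and, swapCoords_comp g σ (x, z)]
    exact ⟨hvanish, hgap⟩
  calc (#{σ | swapCoords σ (x, z) ∈ gapEvent G t} : ℝ)
      ≤ ∑ p ∈ (Set.toFinite L).toFinset, (#(good p) : ℝ) := by
        exact_mod_cast (card_le_card hsub).trans card_biUnion_le
    _ ≤ ∑ p ∈ (Set.toFinite L).toFinset, (2 : ℝ) ^ n * 2 ^ (-t) :=
        sum_le_sum fun p _ => by simpa using card_swapCoords_vanishing_le p.1 p.2 t
    _ = L.ncard * (2 ^ n * 2 ^ (-t)) := by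
        rw [sum_const, nsmul_eq_mul, Set.ncard_eq_toFinset_card L]
    _ ≤ 2 ^ n * (growth G (2 * n) * 2 ^ (-t)) := by
        rw [mul_left_comm]
        gcongr

theorem stmt3_general {X : Type*} [Countable X] [MeasurableSpace X] [MeasurableSingletonClass X]
    (n : ℕ) (P : Measure X) [IsProbabilityMeasure P]
    (G : Set (X → Bool)) (ε : ℝ) :
    (((Measure.pi fun _ : Fin n => P).prod (Measure.pi fun _ : Fin n => P))
      {ω : (Fin n → X) × (Fin n → X) | ∃ g ∈ G,
        (Set.ncard {i : Fin n | g (ω.1 i) = true} : ℝ) / n = 0 ∧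
        ε ≤ (Set.ncard {i : Fin n | g (ω.2 i) = true} : ℝ) / n}).toReal ≤
      (growth G (2 * n) : ℝ) * (2 : ℝ) ^ (-(ε * n)) := by
  classical
  have hsub : {ω : (Fin n → X) × (Fin n → X) | ∃ g ∈ G,
      (Set.ncard {i : Fin n | g (ω.1 i) = true} : ℝ) / n = 0 ∧
      ε ≤ (Set.ncard {i : Fin n | g (ω.2 i) = true} : ℝ) / n} ⊆ gapEvent G (ε * n) := by
    rintro ω ⟨g, hg, hzero, hgap⟩
    refine ⟨g, hg, fun i => ?_, mul_le_of_le_div₀ (by positivity) (by positivity) hgap⟩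
    rcases div_eq_zero_iff.1 hzero with hcard | hn
    · have hempty := (Set.ncard_eq_zero (Set.toFinite _)).1 (by exact_mod_cast hcard)
      simpa using Set.eq_empty_iff_forall_notMem.1 hempty i
    · obtain rfl := Nat.cast_eq_zero.1 hn
      exact i.elim0
  have hgap : (Measure.pi fun _ : Fin n => P).prod (Measure.pi fun _ : Fin n => P)
      (gapEvent G (ε * n)) ≤ ENNReal.ofReal (growth G (2 * n) * 2 ^ (-(ε * n))) := by
    refine measure_le_of_card_filter_le (measurePreserving_swapCoords P)
      (Set.to_countable _).measurableSet fun ω => ?_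
    rw [Fintype.card_fun, Fintype.card_bool, Fintype.card_fin, ← ENNReal.ofReal_natCast,
      ← ENNReal.ofReal_natCast, ← ENNReal.ofReal_mul (by positivity)]
    exact ENNReal.ofReal_le_ofReal (by exact_mod_cast card_swapCoords_mem_gapEvent_le G _ ω.1 ω.2)
  exact ENNReal.toReal_le_of_le_ofReal (by positivity) ((measure_mono hsub).trans hgap)

/-- For any `n`, distribution `P` on countable `X`, family `G` of binary
classifiers, and `ε > 0`: the probability over `x ∼ Pⁿ`, `z ∼ Pⁿ` that some `g ∈ G`
has `(1/n)·Σ g(x_i) = 0` and `(1/n)·Σ g(z_i) ≥ ε` is at most `Π_G[2n]·2^{−εn}`. -/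
theorem stmt3 {X : Type*} [Countable X] [MeasurableSpace X] [MeasurableSingletonClass X]
    (n : ℕ) (P : Measure X) [IsProbabilityMeasure P]
    (G : Set (X → Bool)) (ε : ℝ) (hε : 0 < ε) :
    (((Measure.pi fun _ : Fin n => P).prod (Measure.pi fun _ : Fin n => P))
      {ω : (Fin n → X) × (Fin n → X) | ∃ g ∈ G,
        (Set.ncard {i : Fin n | g (ω.1 i) = true} : ℝ) / n = 0 ∧
        ε ≤ (Set.ncard {i : Fin n | g (ω.2 i) = true} : ℝ) / n}).toReal ≤
      (growth G (2 * n) : ℝ) * (2 : ℝ) ^ (-(ε * n)) :=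
  stmt3_general n P G ε
end

section
/- For any n ∈ ℕ, any probability distribution P on a countable domain X, any family G of binary classifiers g : X → {0,1}, any ε > 0, and any α > 0: the probability over independent samples x ∼ P^n and z ∼ P^n that there exists g ∈ G with (1/n)·Σ_{i∈[n]} g(z_i) ≥ ((1+α)/n)·Σ_{i∈[n]} g(x_i) + ε is at most Π_G[2n]·exp(−(2α/(2+α)²)·εn). -/
/-! The law of the double sample `(x, z)` is invariant under exchanging `xᵢ ↔ zᵢ` on any set
`σ` of indices, so the probability of the bad event is the average over the `2ⁿ` swaps `σ`, and
it suffices to count, for a fixed double sample, the swaps that make it bad. On its `2n` points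
the class `G` induces at most `Π_G[2n]` label patterns. For a fixed pattern,
`Σ g(zᵢ) - (1 + α) Σ g(xᵢ)` under a uniformly random swap is a sum of independent terms, and the
exponential moment with `λ = 2α/(2+α)²`, chosen so that `e^λ + e^(-λ(1+α)) ≤ 2`, shows that at
most `2ⁿ e^(-λεn)` swaps push it above `εn`. -/

open MeasureTheory Finset
open scoped ENNReal

lemma ncard_labelings_le_growth {X : Type*} (G : Set (X → Bool)) {m : ℕ} (w : Fin m → X) :
    Set.ncard {v : Fin m → Bool | ∃ g ∈ G, v = fun i => g (w i)} ≤ growth G m := by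
  refine le_ciSup (f := fun w => Set.ncard {v : Fin m → Bool | ∃ g ∈ G, v = fun i => g (w i)})
    ⟨Nat.card (Fin m → Bool), ?_⟩ w
  rintro _ ⟨w', rfl⟩
  exact Set.ncard_le_card _

lemma ncard_labelPairs_le_growth {X : Type*} (G : Set (X → Bool)) {n : ℕ} (x z : Fin n → X) :
    Set.ncard {p : (Fin n → Bool) × (Fin n → Bool) | ∃ g ∈ G, p = (g ∘ x, g ∘ z)} ≤
      growth G (2 * n) := by
  rw [two_mul]
  let split : (Fin (n + n) → Bool) → (Fin n → Bool) × (Fin n → Bool) :=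
    fun v => (v ∘ Fin.castAdd n, v ∘ Fin.natAdd n)
  have hsub : {p : (Fin n → Bool) × (Fin n → Bool) | ∃ g ∈ G, p = (g ∘ x, g ∘ z)} ⊆
      split '' {v | ∃ g ∈ G, v = fun i => g (Fin.append x z i)} := by
    rintro _ ⟨g, hg, rfl⟩
    refine ⟨_, ⟨g, hg, rfl⟩, ?_⟩
    ext i <;> simp only [split, Function.comp_apply, Fin.append_left, Fin.append_right]
  calc _ ≤ (split '' {v | ∃ g ∈ G, v = fun i => g (Fin.append x z i)}).ncard :=
        Set.ncard_le_ncard hsub (Set.toFinite _)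
    _ ≤ _ := Set.ncard_image_le (Set.toFinite _)
    _ ≤ _ := ncard_labelings_le_growth G _

lemma exp_add_exp_neg_le_two {a : ℝ} (ha : 0 < a) :
    Real.exp (2 * a / (2 + a) ^ 2) + Real.exp (-(2 * a / (2 + a) ^ 2 * (1 + a))) ≤ 2 := by
  set l := 2 * a / (2 + a) ^ 2 with hl
  have hl0 : 0 ≤ l := by positivity
  have hl1 : l < 1 := by rw [hl, div_lt_one (by positivity)]; nlinarith
  have hup : Real.exp l ≤ 1 / (1 - l) := Real.exp_bound_div_one_sub_of_interval hl0 hl1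
  have hdown : Real.exp (-(l * (1 + a))) ≤ 1 / (1 + l * (1 + a)) := by
    rw [Real.exp_neg, one_div]
    exact inv_anti₀ (by positivity) (by linarith [Real.add_one_le_exp (l * (1 + a))])
  have hsum : 1 / (1 - l) + 1 / (1 + l * (1 + a)) ≤ 2 := by
    rw [div_add_div _ _ (by linarith) (by positivity),
      div_le_iff₀ (mul_pos (by linarith) (by positivity)), hl]
    field_simp
    nlinarith [pow_pos ha 4]
  linarith

lemma card_le_two_pow_mul_exp_of_exp_add_exp_le_two {ι : Type*} [Fintype ι] [DecidableEq ι]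
    {l t : ℝ} (hl : 0 ≤ l) (u : ι → Bool → ℝ)
    (hu : ∀ i, Real.exp (l * u i false) + Real.exp (l * u i true) ≤ 2) :
    (#{σ : ι → Bool | t ≤ ∑ i, u i (σ i)} : ℝ) ≤ 2 ^ Fintype.card ι * Real.exp (-(l * t)) := by
  rw [Real.exp_neg, ← div_eq_mul_inv, le_div_iff₀ (Real.exp_pos _)]
  calc (#{σ : ι → Bool | t ≤ ∑ i, u i (σ i)} : ℝ) * Real.exp (l * t)
      ≤ ∑ σ ∈ {σ : ι → Bool | t ≤ ∑ i, u i (σ i)}, Real.exp (l * ∑ i, u i (σ i)) := by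
        rw [← nsmul_eq_mul]
        refine card_nsmul_le_sum _ _ _ fun σ hσ => ?_
        exact Real.exp_le_exp.2 (mul_le_mul_of_nonneg_left (mem_filter.1 hσ).2 hl)
    _ ≤ ∑ σ : ι → Bool, Real.exp (l * ∑ i, u i (σ i)) :=
        sum_le_sum_of_subset_of_nonneg (filter_subset _ _) fun _ _ _ => (Real.exp_pos _).le
    _ = ∏ i, ∑ s : Bool, Real.exp (l * u i s) := by
        simp_rw [mul_sum, Real.exp_sum]
        exact (Fintype.prod_sum fun i s => Real.exp (l * u i s)).symm
    _ ≤ ∏ _i : ι, (2 : ℝ) :=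
        prod_le_prod (fun _ _ => by positivity) fun i _ => by simpa [add_comm] using hu i
    _ = 2 ^ Fintype.card ι := by simp

open scoped Classical in
lemma measureReal_le_of_card_preimage_le {β κ : Type*} [MeasurableSpace β] [Fintype κ]
    [Nonempty κ] {ν : Measure β} [IsProbabilityMeasure ν] {T : κ → β → β}
    (hT : ∀ k, MeasurePreserving (T k) ν ν) {A : Set β} (hA : MeasurableSet A) {C : ℝ}
    (hC : 0 ≤ C) (h : ∀ ω, (#{k | T k ω ∈ A} : ℝ) ≤ Fintype.card κ * C) :
    ν.real A ≤ C := by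
  have hcount : ∀ ω, ∑ k, (T k ⁻¹' A).indicator 1 ω ≤ ENNReal.ofReal (Fintype.card κ * C) := by
    intro ω
    simp only [Set.indicator_apply, Set.mem_preimage, Pi.one_apply, sum_boole]
    rw [← ENNReal.ofReal_natCast]
    exact ENNReal.ofReal_le_ofReal (h ω)
  have hmul : (Fintype.card κ : ℝ≥0∞) * ν A ≤ Fintype.card κ * ENNReal.ofReal C :=
    calc (Fintype.card κ : ℝ≥0∞) * ν A = ∑ k, ν (T k ⁻¹' A) := by
          simp [(hT _).measure_preimage hA.nullMeasurableSet]
      _ = ∫⁻ ω, ∑ k, (T k ⁻¹' A).indicator 1 ω ∂ν := by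
          rw [lintegral_finsetSum _ fun k _ => (measurable_one.indicator ((hT k).measurable hA))]
          simp [lintegral_indicator_one ((hT _).measurable hA)]
      _ ≤ ∫⁻ _, ENNReal.ofReal (Fintype.card κ * C) ∂ν := lintegral_mono hcount
      _ = Fintype.card κ * ENNReal.ofReal C := by
          rw [lintegral_const, measure_univ, mul_one, ENNReal.ofReal_mul (by positivity),
            ENNReal.ofReal_natCast]
  rw [ENNReal.mul_le_mul_iff_right (by simp) (by simp)] at hmul
  exact ENNReal.toReal_le_of_le_ofReal hC hmul

def swapAt {ι α : Type*} (σ : ι → Bool) (ω : (ι → α) × (ι → α)) : (ι → α) × (ι → α) :=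
  (fun i => if σ i then ω.2 i else ω.1 i, fun i => if σ i then ω.1 i else ω.2 i)

lemma measurePreserving_swapAt {ι α : Type*} [Fintype ι] [MeasurableSpace α] (μ : Measure α)
    [SigmaFinite μ] (σ : ι → Bool) :
    MeasurePreserving (swapAt σ) ((Measure.pi fun _ : ι => μ).prod (Measure.pi fun _ => μ))
      ((Measure.pi fun _ : ι => μ).prod (Measure.pi fun _ => μ)) := by
  have he := measurePreserving_arrowProdEquivProdArrow α α ι (fun _ => μ) (fun _ => μ)
  have hswap : ∀ i, MeasurePreserving (fun q : α × α => if σ i then q.swap else q)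
      (μ.prod μ) (μ.prod μ) := fun i => by
    cases σ i
    exacts [MeasurePreserving.id _, Measure.measurePreserving_swap]
  convert he.comp ((measurePreserving_pi _ _ hswap).comp he.symm) using 1
  funext ω
  ext i <;> by_cases h : σ i <;> simp [swapAt, h, MeasurableEquiv.arrowProdEquivProdArrow]

def RelExceeds {n : ℕ} (α ε : ℝ) (p : (Fin n → Bool) × (Fin n → Bool)) : Prop :=
  (1 + α) / n * (Set.ncard {i | p.1 i = true} : ℝ) + ε ≤ (Set.ncard {i | p.2 i = true} : ℝ) / n

def labelGain (α : ℝ) (a b : Bool) : ℝ := (if b then 1 else 0) - (1 + α) * (if a then 1 else 0)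

lemma ncard_eq_sum_ite {ι : Type*} [Fintype ι] (q : ι → Bool) :
    (Set.ncard {i | q i = true} : ℝ) = ∑ i, if q i then 1 else 0 := by
  classical
  rw [Set.ncard_eq_toFinset_card', Set.toFinset_ofPred, ← Finset.sum_boole]

lemma RelExceeds.le_sum_labelGain {n : ℕ} {α ε : ℝ} (hε : 0 < ε)
    {p : (Fin n → Bool) × (Fin n → Bool)} (h : RelExceeds α ε p) :
    ε * n ≤ ∑ i, labelGain α (p.1 i) (p.2 i) := by
  simp only [labelGain, sum_sub_distrib, ← mul_sum, ← ncard_eq_sum_ite]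
  rcases n.eq_zero_or_pos with rfl | hn
  · -- the divisions by `n = 0` vanish, leaving `ε ≤ 0`
    simp [RelExceeds] at h
    linarith
  · have hn' : (0 : ℝ) < n := by exact_mod_cast hn
    unfold RelExceeds at h
    rw [div_mul_eq_mul_div, div_add' _ _ _ hn'.ne', div_le_div_iff_of_pos_right hn'] at h
    linarith

lemma exp_labelGain_add_exp_labelGain_le_two {α l : ℝ} (hα : 0 ≤ α) (hl : 0 ≤ l)
    (hexp : Real.exp l + Real.exp (-(l * (1 + α))) ≤ 2) (a b : Bool) :
    Real.exp (l * labelGain α a b) + Real.exp (l * labelGain α b a) ≤ 2 := by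
  have hneg : Real.exp (-(l * α)) ≤ 1 := Real.exp_le_one_iff.2 (by nlinarith)
  cases a <;> cases b <;> norm_num [labelGain]
  · rwa [show l * (-α + -1) = -(l * (1 + α)) by ring]
  · rwa [add_comm, show l * (-α + -1) = -(l * (1 + α)) by ring]
  · linarith

lemma comp_swapAt {ι α β : Type*} (f : α → β) (σ : ι → Bool) (ω : (ι → α) × (ι → α)) :
    (f ∘ (swapAt σ ω).1, f ∘ (swapAt σ ω).2) = swapAt σ (f ∘ ω.1, f ∘ ω.2) := by
  ext i <;> by_cases h : σ i <;> simp [swapAt, h]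

open scoped Classical in
lemma card_relExceeds_swapAt_le {n : ℕ} {α ε l : ℝ} (hε : 0 < ε) (hα : 0 ≤ α) (hl : 0 ≤ l)
    (hexp : Real.exp l + Real.exp (-(l * (1 + α))) ≤ 2) (p : (Fin n → Bool) × (Fin n → Bool)) :
    (#{σ : Fin n → Bool | RelExceeds α ε (swapAt σ p)} : ℝ) ≤
      2 ^ n * Real.exp (-(l * (ε * n))) := by
  let u : Fin n → Bool → ℝ := fun i s =>
    labelGain α (if s then p.2 i else p.1 i) (if s then p.1 i else p.2 i)
  calc (#{σ : Fin n → Bool | RelExceeds α ε (swapAt σ p)} : ℝ)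
      ≤ #{σ : Fin n → Bool | ε * n ≤ ∑ i, u i (σ i)} := by
        gcongr with σ
        exact fun h => h.le_sum_labelGain hε
    _ ≤ 2 ^ Fintype.card (Fin n) * Real.exp (-(l * (ε * n))) :=
        card_le_two_pow_mul_exp_of_exp_add_exp_le_two hl u fun i => by
          simpa [u] using exp_labelGain_add_exp_labelGain_le_two hα hl hexp (p.1 i) (p.2 i)
    _ = 2 ^ n * Real.exp (-(l * (ε * n))) := by rw [Fintype.card_fin]

open scoped Classical in
lemma card_exists_relExceeds_swapAt_le {X : Type*} (G : Set (X → Bool)) {n : ℕ} {α ε l : ℝ}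
    (hε : 0 < ε) (hα : 0 ≤ α) (hl : 0 ≤ l) (hexp : Real.exp l + Real.exp (-(l * (1 + α))) ≤ 2)
    (ω : (Fin n → X) × (Fin n → X)) :
    (#{σ : Fin n → Bool | ∃ g ∈ G, RelExceeds α ε (g ∘ (swapAt σ ω).1, g ∘ (swapAt σ ω).2)} : ℝ)
      ≤ growth G (2 * n) * (2 ^ n * Real.exp (-(l * (ε * n)))) := by
  have hF : {p | ∃ g ∈ G, p = (g ∘ ω.1, g ∘ ω.2)}.Finite := Set.toFinite _
  have hsub : ({σ | ∃ g ∈ G, RelExceeds α ε (g ∘ (swapAt σ ω).1, g ∘ (swapAt σ ω).2)} :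
      Finset (Fin n → Bool)) ⊆
        hF.toFinset.biUnion fun p => {σ | RelExceeds α ε (swapAt σ p)} := by
    intro σ hσ
    obtain ⟨g, hg, h⟩ := (mem_filter.1 hσ).2
    rw [comp_swapAt] at h
    exact mem_biUnion.2 ⟨_, hF.mem_toFinset.2 ⟨g, hg, rfl⟩, mem_filter.2 ⟨mem_univ _, h⟩⟩
  calc _ ≤ ∑ p ∈ hF.toFinset, (#{σ : Fin n → Bool | RelExceeds α ε (swapAt σ p)} : ℝ) := by
        exact_mod_cast (card_le_card hsub).trans card_biUnion_le
    _ ≤ ∑ _p ∈ hF.toFinset, 2 ^ n * Real.exp (-(l * (ε * n))) :=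
        sum_le_sum fun p _ => card_relExceeds_swapAt_le hε hα hl hexp p
    _ ≤ growth G (2 * n) * (2 ^ n * Real.exp (-(l * (ε * n)))) := by
        rw [sum_const, nsmul_eq_mul, ← Set.ncard_eq_toFinset_card _ hF]
        gcongr
        exact_mod_cast ncard_labelPairs_le_growth G ω.1 ω.2

/-- For any `n`, distribution `P` on countable `X`, family `G`, `ε > 0`,
`α > 0`: the probability over `x ∼ Pⁿ`, `z ∼ Pⁿ` that some `g ∈ G` has
`(1/n)·Σ g(z_i) ≥ ((1+α)/n)·Σ g(x_i) + ε` is at most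
`Π_G[2n]·exp(−(2α/(2+α)²)·εn)`. -/
theorem stmt4 {X : Type*} [Countable X] [MeasurableSpace X] [MeasurableSingletonClass X]
    (n : ℕ) (P : Measure X) [IsProbabilityMeasure P]
    (G : Set (X → Bool)) (ε α : ℝ) (hε : 0 < ε) (hα : 0 < α) :
    (((Measure.pi fun _ : Fin n => P).prod (Measure.pi fun _ : Fin n => P))
      {ω : (Fin n → X) × (Fin n → X) | ∃ g ∈ G,
        ((1 + α) / n) * (Set.ncard {i : Fin n | g (ω.1 i) = true} : ℝ) + ε ≤
          (Set.ncard {i : Fin n | g (ω.2 i) = true} : ℝ) / n}).toReal ≤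
      (growth G (2 * n) : ℝ) * Real.exp (-(2 * α / (2 + α) ^ 2 * (ε * n))) := by
  refine measureReal_le_of_card_preimage_le (fun σ => measurePreserving_swapAt P σ)
    .of_discrete (by positivity) fun ω => ?_
  calc _ ≤ growth G (2 * n) * (2 ^ n * Real.exp (-(2 * α / (2 + α) ^ 2 * (ε * n)))) :=
        card_exists_relExceeds_swapAt_le G hε hα.le (by positivity) (exp_add_exp_neg_le_two hα) ω
    _ = _ := by simp only [Fintype.card_fun, Fintype.card_bool, Fintype.card_fin]; push_cast; ring
end

section
/- Let C be a class of binary classifiers on a countable domain X with VC dimension d ≥ 2, let P be a probability distribution on X, let T, n ∈ ℕ with n ≥ 1, let δ ∈ (0,1], and set ε := (1/n)·(d(T+1)·log₂(2n) + log₂(1/δ)). Then the probability over independent samples x ∼ P^n and z ∼ P^n that there exist h ∈ C and c = (c_1,…,c_T) ∈ C^T with rej_x(S(h,c)) = 0 and rej_z(S(h,c)) > ε is at most δ. -/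
open MeasureTheory

/-- A finite set `A` is shattered by `C` if every boolean labeling of `A` is
realized by some member of `C`. -/
def Shatters {X : Type*} (C : Set (X → Bool)) (A : Finset X) : Prop :=
  ∀ b : X → Bool, ∃ g ∈ C, ∀ a ∈ A, g a = b a

/-- `C` has VC dimension `d`: some set of size `d` is shattered and no larger set is. -/
def VCDim {X : Type*} (C : Set (X → Bool)) (d : ℕ) : Prop :=
  (∃ A : Finset X, A.card = d ∧ Shatters C A) ∧ ∀ A : Finset X, Shatters C A → A.card ≤ d

/-!
Symmetrization with a ghost sample. Swapping `x i` and `z i` for all `i` in a set `S` of indices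
preserves the law of `(x, z)`, so the probability of the bad event equals the average over the
`2ⁿ` swap sets `S` of the probability that the swapped pair is bad. For a fixed pair `(x, z)`,
whether a committee `(h, c)` makes the swapped pair bad depends only on which of the `2n` sample
points it rejects; by Sauer–Shelah there are at most `(2n)^{d(T+1)}` such rejection patterns. A
pattern with `k > εn` rejected pairs is made bad only by swap sets that put every rejected point
on the `z` side, which fixes `S` on those `k` indices and leaves at most `2^{n-k} < 2ⁿ 2^{-εn}`
choices; and `(2n)^{d(T+1)} 2^{-εn} = δ` by the choice of `ε`.
-/

open scoped Finset ENNReal Nat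

theorem Nat.sum_Iic_choose_le_pow {m d : ℕ} (hm : 2 ≤ m) (hd : 2 ≤ d) :
    ∑ k ∈ Finset.Iic d, m.choose k ≤ m ^ d := by
  simp only [← Nat.range_succ_eq_Iic]
  induction d, hd using Nat.le_induction with
  | base =>
    obtain ⟨k, rfl⟩ : ∃ k, m = k + 2 := ⟨m - 2, by omega⟩
    have h := Nat.descFactorial_eq_factorial_mul_choose (k + 2) 2
    simp only [Nat.descFactorial, Nat.factorial, Nat.add_one_sub_one, Nat.sub_zero] at h
    simp only [Finset.sum_range_succ, Finset.range_zero, Finset.sum_empty, Nat.choose_zero_right,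
      Nat.choose_one_right]
    nlinarith
  | succ d hd ih =>
    have hchoose : 6 * m.choose (d + 1) ≤ m ^ d * m :=
      calc 6 * m.choose (d + 1) ≤ (d + 1)! * m.choose (d + 1) := by
            gcongr
            exact (Nat.factorial_le (show 3 ≤ d + 1 by omega) :)
        _ = m.descFactorial (d + 1) := (Nat.descFactorial_eq_factorial_mul_choose m (d + 1)).symm
        _ ≤ m ^ d * m := Nat.descFactorial_le_pow m (d + 1)
    rw [Finset.sum_range_succ, pow_succ]
    linarith [Nat.mul_le_mul_left (m ^ d) hm]

theorem Finset.card_Icc_compl_le {ι : Type*} [Fintype ι] [DecidableEq ι] (U V : Finset ι) :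
    #(Finset.Icc U Vᶜ) ≤ 2 ^ (Fintype.card ι - #(U ∪ V)) := by
  by_cases hUV : U ⊆ Vᶜ
  · rw [Finset.card_Icc_finset hUV, Finset.card_compl,
      Finset.card_union_of_disjoint (Finset.subset_compl_iff_disjoint_right.1 hUV), Nat.sub_sub,
      add_comm]
  · simp [Finset.Icc_eq_empty hUV]

theorem two_pow_sub_le_div_rpow {N m : ℕ} {t : ℝ} (hmN : m ≤ N) (htm : t < m) :
    (2 : ℝ) ^ (N - m) ≤ 2 ^ N / 2 ^ t := by
  rw [le_div_iff₀ (by positivity)]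
  calc (2 : ℝ) ^ (N - m) * 2 ^ t ≤ 2 ^ (N - m) * 2 ^ m := by
        gcongr
        rw [← Real.rpow_natCast]
        exact Real.rpow_le_rpow_of_exponent_le one_le_two htm.le
    _ = 2 ^ N := by rw [← pow_add, Nat.sub_add_cancel hmN]

theorem two_rpow_mul_logb_add_logb {b δ : ℝ} (hb : 0 < b) (hδ : 0 < δ) (D : ℕ) :
    (2 : ℝ) ^ (D * Real.logb 2 b + Real.logb 2 (1 / δ)) = b ^ D / δ := by
  rw [Real.rpow_add two_pos, mul_comm (D : ℝ), Real.rpow_mul zero_le_two,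
    Real.rpow_logb two_pos (by norm_num) hb, Real.rpow_logb two_pos (by norm_num) (by positivity),
    Real.rpow_natCast, mul_one_div]

section Traces

variable {X ι : Type*} [Fintype ι] {C : Set (X → Bool)} {a : ι → X}

open Classical in
noncomputable def traces (C : Set (X → Bool)) (a : ι → X) : Finset (Finset ι) :=
  {s | ∃ g ∈ C, ∀ i, i ∈ s ↔ g (a i) = true}

theorem mem_traces {s : Finset ι} : s ∈ traces C a ↔ ∃ g ∈ C, ∀ i, i ∈ s ↔ g (a i) = true := by
  simp [traces]

theorem injOn_of_shatters_traces [DecidableEq ι] {s : Finset ι} (hs : (traces C a).Shatters s) :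
    Set.InjOn a s := by
  intro i hi j hj hij
  obtain ⟨u, hu, hsu⟩ := hs (Finset.singleton_subset_iff.2 hi)
  obtain ⟨g, -, hg⟩ := mem_traces.1 hu
  have hiu : i ∈ u := (Finset.mem_inter.1 (hsu ▸ Finset.mem_singleton_self i)).2
  have hju : j ∈ u := (hg j).2 (hij ▸ (hg i).1 hiu)
  have : j ∈ s ∩ u := Finset.mem_inter.2 ⟨hj, hju⟩
  rw [hsu] at this
  exact (Finset.mem_singleton.1 this).symm

theorem shatters_image_of_shatters_traces [DecidableEq ι] [DecidableEq X] {s : Finset ι}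
    (hs : (traces C a).Shatters s) : Shatters C (s.image a) := by
  intro b
  obtain ⟨u, hu, hsu⟩ := hs (Finset.filter_subset (fun i => b (a i) = true) s)
  obtain ⟨g, hgC, hg⟩ := mem_traces.1 hu
  refine ⟨g, hgC, ?_⟩
  simp only [Finset.mem_image, forall_exists_index, and_imp]
  rintro _ i hi rfl
  rw [Bool.eq_iff_iff, ← hg]
  simpa [hi] using congrArg (i ∈ ·) hsu

theorem vcDim_traces_le [DecidableEq ι] {d : ℕ}
    (hC : ∀ A : Finset X, Shatters C A → A.card ≤ d) : (traces C a).vcDim ≤ d := by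
  classical
  refine Finset.sup_le fun s hs => ?_
  have hs := Finset.mem_shatterer.1 hs
  rw [← Finset.card_image_of_injOn (injOn_of_shatters_traces hs)]
  exact hC _ (shatters_image_of_shatters_traces hs)

theorem card_traces_le {d : ℕ} (hC : ∀ A : Finset X, Shatters C A → A.card ≤ d) (hd : 2 ≤ d)
    (hι : 2 ≤ Fintype.card ι) : #(traces C a) ≤ Fintype.card ι ^ d := by
  classical
  calc #(traces C a) ≤ #(traces C a).shatterer := Finset.card_le_card_shatterer _
    _ ≤ ∑ k ∈ Finset.Iic (traces C a).vcDim, (Fintype.card ι).choose k :=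
      Finset.card_shatterer_le_sum_vcDim
    _ ≤ ∑ k ∈ Finset.Iic d, (Fintype.card ι).choose k :=
      Finset.sum_le_sum_of_subset (Finset.Iic_subset_Iic.2 (vcDim_traces_le hC))
    _ ≤ Fintype.card ι ^ d := Nat.sum_Iic_choose_le_pow hι hd

end Traces

section Rejection

variable {X ι κ : Type*}

def agreementSet (h : X → Bool) (c : κ → X → Bool) : Set X := {x | ∀ j, c j x = h x}

variable [Fintype ι]

open Classical in
/-- `#(rejIdx A x) / n` is the empirical rejection rate `rej_x(A)`. -/
noncomputable def rejIdx (A : Set X) (x : ι → X) : Finset ι := {i | x i ∉ A}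

@[simp]
theorem mem_rejIdx {A : Set X} {x : ι → X} {i : ι} : i ∈ rejIdx A x ↔ x i ∉ A := by
  simp [rejIdx]

theorem ncard_setOf_notMem_eq_card_rejIdx (A : Set X) (x : ι → X) :
    {i | x i ∉ A}.ncard = #(rejIdx A x) := by
  rw [← Set.ncard_coe_finset]
  congr
  ext
  simp

theorem toLeft_rejIdx_sumElim (A : Set X) (x z : ι → X) :
    (rejIdx A (Sum.elim x z)).toLeft = rejIdx A x := by
  ext; simp

theorem toRight_rejIdx_sumElim (A : Set X) (x z : ι → X) :
    (rejIdx A (Sum.elim x z)).toRight = rejIdx A z := by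
  ext; simp

open Classical in
noncomputable def rejectionSets (C : Set (X → Bool)) (κ : Type*) (a : ι → X) :
    Finset (Finset ι) :=
  {R | ∃ h ∈ C, ∃ c : κ → X → Bool, (∀ j, c j ∈ C) ∧ R = rejIdx (agreementSet h c) a}

theorem mem_rejectionSets {C : Set (X → Bool)} {a : ι → X} {R : Finset ι} :
    R ∈ rejectionSets C κ a ↔
      ∃ h ∈ C, ∃ c : κ → X → Bool, (∀ j, c j ∈ C) ∧ R = rejIdx (agreementSet h c) a := by
  simp [rejectionSets]

theorem card_rejectionSets_le [Fintype κ] (C : Set (X → Bool)) (a : ι → X) :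
    #(rejectionSets C κ a) ≤ #(traces C a) ^ (Fintype.card κ + 1) := by
  classical
  -- the rejection set of `(h, c)` is read off from the traces of `h` and of the `c j`
  let F : Finset ι × (κ → Finset ι) → Finset ι := fun p => {i | ¬ ∀ j, (i ∈ p.2 j ↔ i ∈ p.1)}
  have hsub : rejectionSets C κ a ⊆
      (traces C a ×ˢ Fintype.piFinset fun _ => traces C a).image F := by
    intro R hR
    obtain ⟨h, hh, c, hc, rfl⟩ := mem_rejectionSets.1 hR
    refine Finset.mem_image.2 ⟨((Finset.univ.filter fun i => h (a i)),
      fun j => Finset.univ.filter fun i => c j (a i)), ?_, ?_⟩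
    · simp only [Finset.mem_product, Fintype.mem_piFinset, mem_traces]
      exact ⟨⟨h, hh, by simp⟩, fun j => ⟨c j, hc j, by simp⟩⟩
    · ext i
      simp only [F, agreementSet, mem_rejIdx, Set.mem_ofPred_eq, Finset.mem_filter,
        Finset.mem_univ, true_and, Bool.coe_iff_coe]
  calc #(rejectionSets C κ a)
      ≤ #((traces C a ×ˢ Fintype.piFinset fun _ => traces C a).image F) :=
        Finset.card_le_card hsub
    _ ≤ #(traces C a ×ˢ Fintype.piFinset fun _ => traces C a) := Finset.card_image_le
    _ = #(traces C a) ^ (Fintype.card κ + 1) := by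
      rw [Finset.card_product, Fintype.card_piFinset, Finset.prod_const, pow_succ']
      rfl

theorem card_rejectionSets_le_pow [Fintype κ] {C : Set (X → Bool)} {d : ℕ}
    (hC : ∀ A : Finset X, Shatters C A → A.card ≤ d) (hd : 2 ≤ d) (hι : 2 ≤ Fintype.card ι)
    (a : ι → X) : #(rejectionSets C κ a) ≤ Fintype.card ι ^ (d * (Fintype.card κ + 1)) :=
  (card_rejectionSets_le C a).trans <| by
    rw [pow_mul]
    exact Nat.pow_le_pow_left (card_traces_le hC hd hι) _

end Rejection

section Swap

variable {X ι : Type*} [DecidableEq ι]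

def swapSample (S : Finset ι) (ω : (ι → X) × (ι → X)) : (ι → X) × (ι → X) :=
  (fun i => if i ∈ S then ω.2 i else ω.1 i, fun i => if i ∈ S then ω.1 i else ω.2 i)

theorem measurePreserving_swapSample [Fintype ι] [MeasurableSpace X] (P : Measure X)
    [SigmaFinite P] (S : Finset ι) :
    MeasurePreserving (swapSample S) ((Measure.pi fun _ : ι => P).prod (Measure.pi fun _ => P))
      ((Measure.pi fun _ : ι => P).prod (Measure.pi fun _ => P)) := by
  let e := MeasurableEquiv.arrowProdEquivProdArrow X X ι
  have he : MeasurePreserving e (Measure.pi fun _ => P.prod P) _ :=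
    measurePreserving_arrowProdEquivProdArrow X X ι (fun _ => P) (fun _ => P)
  have hswap (i : ι) :
      MeasurePreserving (if i ∈ S then Prod.swap else id) (P.prod P) (P.prod P) := by
    split_ifs
    exacts [Measure.measurePreserving_swap, MeasurePreserving.id _]
  convert he.comp ((measurePreserving_pi _ _ hswap).comp he.symm) using 1
  funext ω
  ext i <;> by_cases hi : i ∈ S <;>
    simp [swapSample, e, hi, MeasurableEquiv.arrowProdEquivProdArrow,
      Equiv.arrowProdEquivProdArrow]

theorem mem_Icc_and_rejIdx_swapSample_snd_of_fst_eq_empty [Fintype ι] {A : Set X} {S : Finset ι}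
    {ω : (ι → X) × (ι → X)} (h : rejIdx A (swapSample S ω).1 = ∅) :
    S ∈ Finset.Icc (rejIdx A ω.1) (rejIdx A ω.2)ᶜ ∧
      rejIdx A (swapSample S ω).2 = rejIdx A ω.1 ∪ rejIdx A ω.2 := by
  have hacc (i : ι) : (if i ∈ S then ω.2 i else ω.1 i) ∈ A := by
    simpa [Finset.eq_empty_iff_forall_notMem, swapSample] using Finset.ext_iff.1 h i
  refine ⟨Finset.mem_Icc.2 ⟨fun i hi => ?_, fun i hi => ?_⟩, Finset.ext fun i => ?_⟩ <;>
    have := hacc i <;> by_cases hiS : i ∈ S <;> simp_all [swapSample]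

end Swap

section BadEvent

variable {X ι : Type*} [Fintype ι] [DecidableEq ι]

def badEvent (C : Set (X → Bool)) (κ : Type*) (t : ℝ) : Set ((ι → X) × (ι → X)) :=
  {ω | ∃ h ∈ C, ∃ c : κ → X → Bool, (∀ j, c j ∈ C) ∧
    rejIdx (agreementSet h c) ω.1 = ∅ ∧ t < #(rejIdx (agreementSet h c) ω.2)}

open Classical in
theorem card_swapSample_mem_badEvent_le (C : Set (X → Bool)) (κ : Type*) (t : ℝ)
    (ω : (ι → X) × (ι → X)) :
    (#{S : Finset ι | swapSample S ω ∈ badEvent C κ t} : ℝ) ≤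
      #(rejectionSets C κ (Sum.elim ω.1 ω.2)) * (2 ^ Fintype.card ι / 2 ^ t) := by
  let 𝓡 := (rejectionSets C κ (Sum.elim ω.1 ω.2)).filter fun R => t < #(R.toLeft ∪ R.toRight)
  have hcover : ({S : Finset ι | swapSample S ω ∈ badEvent C κ t} : Finset _) ⊆
      𝓡.biUnion fun R => Finset.Icc R.toLeft R.toRightᶜ := by
    intro S hS
    obtain ⟨h, hh, c, hc, hfst, hsnd⟩ := (Finset.mem_filter.1 hS).2
    obtain ⟨hS, hrej⟩ := mem_Icc_and_rejIdx_swapSample_snd_of_fst_eq_empty hfst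
    refine Finset.mem_biUnion.2 ⟨rejIdx (agreementSet h c) (Sum.elim ω.1 ω.2), ?_, ?_⟩
    · simp only [𝓡, Finset.mem_filter, toLeft_rejIdx_sumElim, toRight_rejIdx_sumElim, ← hrej]
      exact ⟨mem_rejectionSets.2 ⟨h, hh, c, hc, rfl⟩, hsnd⟩
    · rwa [toLeft_rejIdx_sumElim, toRight_rejIdx_sumElim]
  have hterm : ∀ R ∈ 𝓡,
      (#(Finset.Icc R.toLeft R.toRightᶜ) : ℝ) ≤ 2 ^ Fintype.card ι / 2 ^ t := by
    intro R hR
    calc (#(Finset.Icc R.toLeft R.toRightᶜ) : ℝ)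
        ≤ (2 : ℝ) ^ (Fintype.card ι - #(R.toLeft ∪ R.toRight)) := by
          exact_mod_cast Finset.card_Icc_compl_le _ _
      _ ≤ _ := two_pow_sub_le_div_rpow (Finset.card_le_univ _) (Finset.mem_filter.1 hR).2
  calc (#{S : Finset ι | swapSample S ω ∈ badEvent C κ t} : ℝ)
      ≤ ∑ R ∈ 𝓡, (#(Finset.Icc R.toLeft R.toRightᶜ) : ℝ) := by
        exact_mod_cast (Finset.card_le_card hcover).trans Finset.card_biUnion_le
    _ ≤ #𝓡 * (2 ^ Fintype.card ι / 2 ^ t) := by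
        simpa using Finset.sum_le_sum hterm
    _ ≤ #(rejectionSets C κ (Sum.elim ω.1 ω.2)) * (2 ^ Fintype.card ι / 2 ^ t) := by
        gcongr
        exact Finset.filter_subset _ _

open Classical in
theorem card_swapSample_mem_badEvent_le_pow {κ : Type*} [Fintype κ] {C : Set (X → Bool)}
    {d : ℕ} (hC : ∀ A : Finset X, Shatters C A → A.card ≤ d) (hd : 2 ≤ d)
    (hι : 1 ≤ Fintype.card ι) (t : ℝ) (ω : (ι → X) × (ι → X)) :
    (#{S : Finset ι | swapSample S ω ∈ badEvent C κ t} : ℝ) ≤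
      (2 * Fintype.card ι) ^ (d * (Fintype.card κ + 1)) * (2 ^ Fintype.card ι / 2 ^ t) := by
  have hpatterns := card_rejectionSets_le_pow (κ := κ) hC hd
    (by simp only [Fintype.card_sum]; omega) (Sum.elim ω.1 ω.2)
  rw [Fintype.card_sum, ← two_mul] at hpatterns
  refine (card_swapSample_mem_badEvent_le C κ t ω).trans ?_
  gcongr
  exact_mod_cast hpatterns

end BadEvent

open Classical in
theorem measure_le_of_forall_card_le {Ω G : Type*} [MeasurableSpace Ω] [Fintype G] [Nonempty G]
    {μ : Measure Ω} {τ : G → Ω → Ω} (hτ : ∀ g, MeasurePreserving (τ g) μ μ) {E : Set Ω}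
    (hE : MeasurableSet E) {K : ℝ≥0∞}
    (hK : ∀ ω, (#{g | τ g ω ∈ E} : ℝ≥0∞) ≤ Fintype.card G * K) :
    μ E ≤ K * μ Set.univ := by
  have hcard : (Fintype.card G : ℝ≥0∞) * μ E = ∫⁻ ω, (#{g | τ g ω ∈ E} : ℝ≥0∞) ∂μ :=
    calc (Fintype.card G : ℝ≥0∞) * μ E = ∑ g, μ (τ g ⁻¹' E) := by
          simp [fun g => (hτ g).measure_preimage hE.nullMeasurableSet]
      _ = ∑ g, ∫⁻ ω, (τ g ⁻¹' E).indicator 1 ω ∂μ := by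
          simp [lintegral_indicator_one ((hτ _).measurable hE)]
      _ = ∫⁻ ω, ∑ g, (τ g ⁻¹' E).indicator 1 ω ∂μ :=
          (lintegral_finsetSum _ fun g _ => measurable_one.indicator ((hτ g).measurable hE)).symm
      _ = ∫⁻ ω, (#{g | τ g ω ∈ E} : ℝ≥0∞) ∂μ := by
          simp [Set.indicator_apply]
  have : (Fintype.card G : ℝ≥0∞) * μ E ≤ Fintype.card G * (K * μ Set.univ) := by
    rw [hcard, ← mul_assoc, ← lintegral_const]
    exact lintegral_mono hK
  exact (ENNReal.mul_le_mul_iff_right (by simp) (by simp)).1 this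

theorem stmt6_general {X : Type*} [Countable X] [MeasurableSpace X] [MeasurableSingletonClass X]
    (C : Set (X → Bool)) (d : ℕ) (hd : 2 ≤ d) (hC : VCDim C d)
    (P : Measure X) [IsProbabilityMeasure P] (T n : ℕ) (hn : 1 ≤ n)
    (δ : ℝ) (hδ0 : 0 < δ) (ε : ℝ)
    (hε : ε = (1 / (n : ℝ)) *
      ((d : ℝ) * ((T : ℝ) + 1) * Real.logb 2 (2 * n) + Real.logb 2 (1 / δ))) :
    (((Measure.pi fun _ : Fin n => P).prod (Measure.pi fun _ : Fin n => P))
      {ω : (Fin n → X) × (Fin n → X) | ∃ h ∈ C, ∃ c : Fin T → X → Bool, (∀ i, c i ∈ C) ∧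
        (Set.ncard {i : Fin n | ω.1 i ∉ {a : X | ∀ j, c j a = h a}} : ℝ) / n = 0 ∧
        ε < (Set.ncard {i : Fin n | ω.2 i ∉ {a : X | ∀ j, c j a = h a}} : ℝ) / n}).toReal
      ≤ δ := by
  classical
  have hn0 : (0 : ℝ) < n := by exact_mod_cast hn
  have hpow : (2 : ℝ) ^ (ε * n) = (2 * n) ^ (d * (T + 1)) / δ := by
    rw [← two_rpow_mul_logb_add_logb (by positivity) hδ0]
    congr 1
    rw [hε]
    field_simp
    push_cast
    ring
  have hcount (ω : (Fin n → X) × (Fin n → X)) :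
      (#{S | swapSample S ω ∈ badEvent C (Fin T) (ε * n)} : ℝ≥0∞) ≤
        Fintype.card (Finset (Fin n)) * ENNReal.ofReal δ := by
    have hreal := card_swapSample_mem_badEvent_le_pow (κ := Fin T) hC.2 hd (by simpa) (ε * n) ω
    simp only [Fintype.card_fin, hpow] at hreal
    rw [Fintype.card_finset, Fintype.card_fin, ← ENNReal.ofReal_natCast]
    calc _ ≤ ENNReal.ofReal (2 ^ n * δ) := ENNReal.ofReal_le_ofReal (hreal.trans_eq (by field_simp))
      _ = _ := by rw [ENNReal.ofReal_mul (by positivity)]; norm_num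
  have hbad := measure_le_of_forall_card_le (measurePreserving_swapSample P) .of_discrete hcount
  refine ENNReal.toReal_le_of_le_ofReal hδ0.le ((measure_mono ?_).trans (by simpa using hbad))
  rintro ω ⟨h, hh, c, hc, hfst, hsnd⟩
  rw [ncard_setOf_notMem_eq_card_rejIdx] at hfst hsnd
  exact ⟨h, hh, c, hc, by simpa [hn0.ne', agreementSet] using hfst, (lt_div_iff₀ hn0).1 hsnd⟩

/-- for a class `C` of VC dimension `d ≥ 2`, distribution `P`, `T, n ∈ ℕ`
with `n ≥ 1`, `δ ∈ (0,1]`, and `ε = (1/n)(d(T+1)log₂(2n) + log₂(1/δ))`: the probability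
over `x, z ∼ Pⁿ` that some `h ∈ C`, `c ∈ C^T` have `rej_x(S(h,c)) = 0` and
`rej_z(S(h,c)) > ε` is at most `δ`. Here `S(h,c) = {a | h(a)=c₁(a)=⋯=c_T(a)}`. -/
theorem stmt6 {X : Type*} [Countable X] [MeasurableSpace X] [MeasurableSingletonClass X]
    (C : Set (X → Bool)) (d : ℕ) (hd : 2 ≤ d) (hC : VCDim C d)
    (P : Measure X) [IsProbabilityMeasure P] (T n : ℕ) (hn : 1 ≤ n)
    (δ : ℝ) (hδ0 : 0 < δ) (hδ1 : δ ≤ 1) (ε : ℝ)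
    (hε : ε = (1 / (n : ℝ)) *
      ((d : ℝ) * ((T : ℝ) + 1) * Real.logb 2 (2 * n) + Real.logb 2 (1 / δ))) :
    (((Measure.pi fun _ : Fin n => P).prod (Measure.pi fun _ : Fin n => P))
      {ω : (Fin n → X) × (Fin n → X) | ∃ h ∈ C, ∃ c : Fin T → X → Bool, (∀ i, c i ∈ C) ∧
        (Set.ncard {i : Fin n | ω.1 i ∉ {a : X | ∀ j, c j a = h a}} : ℝ) / n = 0 ∧
        ε < (Set.ncard {i : Fin n | ω.2 i ∉ {a : X | ∀ j, c j a = h a}} : ℝ) / n}).toReal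
      ≤ δ :=
  stmt6_general C d hd hC P T n hn δ hδ0 ε hε
end

section
/- Let X be a set, n ∈ ℕ, Λ > 0, let h, c_1, …, c_T : X → {0,1}, and for t = 1, …, T+1 define S_t := {x ∈ X : h(x) = c_1(x) = ⋯ = c_{t−1}(x)} (so S_1 = X). Let x, z ∈ X^n, and suppose that for each t ∈ [T]: |{i ∈ [n] : z_i ∈ S_t and c_t(z_i) ≠ h(z_i)}| ≥ Λ · |{i ∈ [n] : c_t(x_i) ≠ h(x_i)}|. Then rej_x(S_{T+1}) ≤ 1/Λ. (This is the training-rejection bound satisfied by the output of Rejectron run with weight Λ, since its chosen c_t always achieves a nonnegative score.) -/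
/-!
Every rejected training point disagrees with `h` on some `c_t`, so by the union bound
`Λ · #rejected ≤ Σ_t Λ · #{i | c_t(x_i) ≠ h(x_i)} ≤ Σ_t #{i | z_i ∈ S_t, c_t(z_i) ≠ h(z_i)}`.
The sets in the last sum are pairwise disjoint, because `z_i ∈ S_t` means that `t` is the first
index at which `c_t(z_i) ≠ h(z_i)`; hence the sum is at most `n`.
-/

open Set Function

section

variable {α β ι : Type*}

-- With `P t a := c t a = h a`, this is the paper's `S_t ∩ {c_t ≠ h}`.
def firstFailure [LT ι] (P : ι → α → Prop) (t : ι) : Set α :=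
  {a | (∀ j < t, P j a) ∧ ¬ P t a}

lemma ncard_not_forall_le_sum [Fintype ι] (P : ι → α → Prop) :
    {a | ¬ ∀ i, P i a}.ncard ≤ ∑ i, {a | ¬ P i a}.ncard := by
  have hunion : {a | ¬ ∀ i, P i a} = ⋃ i, {a | ¬ P i a} := by ext; simp
  exact hunion ▸ ncard_iUnion_le_of_fintype _

lemma pairwise_disjoint_firstFailure [LinearOrder ι] (P : ι → α → Prop) :
    Pairwise (Disjoint on (firstFailure P)) := by
  intro s t hst
  rw [Function.onFun, Set.disjoint_left]
  rintro a ⟨hbefore_s, hfail_s⟩ ⟨hbefore_t, hfail_t⟩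
  rcases hst.lt_or_gt with hlt | hlt
  · exact hfail_s (hbefore_t s hlt)
  · exact hfail_t (hbefore_s t hlt)

lemma sum_ncard_firstFailure_le_card [Finite α] [Fintype ι] [LinearOrder ι]
    (P : ι → α → Prop) : ∑ t, (firstFailure P t).ncard ≤ Nat.card α := by
  rw [← finsum_eq_sum_of_fintype,
    ← ncard_iUnion_of_finite (fun _ => toFinite _) (pairwise_disjoint_firstFailure P)]
  exact ncard_le_card _

lemma mul_ncard_not_forall_le_card [Finite β] [Fintype ι] [LinearOrder ι] {Λ : ℝ} (hΛ : 0 ≤ Λ)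
    (P : ι → α → Prop) (Q : ι → β → Prop)
    (hstep : ∀ t, Λ * {a | ¬ P t a}.ncard ≤ (firstFailure Q t).ncard) :
    Λ * {a | ¬ ∀ t, P t a}.ncard ≤ Nat.card β :=
  calc Λ * {a | ¬ ∀ t, P t a}.ncard
      ≤ Λ * ∑ t, ({a | ¬ P t a}.ncard : ℝ) := by
        gcongr; exact_mod_cast ncard_not_forall_le_sum P
    _ = ∑ t, Λ * {a | ¬ P t a}.ncard := Finset.mul_sum _ _ _
    _ ≤ ∑ t, ((firstFailure Q t).ncard : ℝ) := Finset.sum_le_sum fun t _ => hstep t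
    _ ≤ Nat.card β := by exact_mod_cast sum_ncard_firstFailure_le_card Q

end

/-- Let `X` be a set, `n ∈ ℕ`, `Λ > 0`, classifiers
`h, c_1, …, c_T : X → {0,1}` (here `c : Fin T → X → Bool`, 0-indexed), and for each
`t` let `S_t = {x | h(x) = c_j(x) for all j < t}` (so the paper's `S_{T+1}` is
`{x | ∀ j, c_j(x) = h(x)}`). If for each `t`,
`|{i : z_i ∈ S_t ∧ c_t(z_i) ≠ h(z_i)}| ≥ Λ·|{i : c_t(x_i) ≠ h(x_i)}|`,
then `rej_x(S_{T+1}) ≤ 1/Λ`. -/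
theorem stmt12 {X : Type*} (n T : ℕ) (Λ : ℝ) (hΛ : 0 < Λ)
    (h : X → Bool) (c : Fin T → X → Bool) (x z : Fin n → X)
    (hstep : ∀ t : Fin T,
      Λ * (Set.ncard {i : Fin n | c t (x i) ≠ h (x i)} : ℝ) ≤
        (Set.ncard {i : Fin n |
          (∀ j : Fin T, (j : ℕ) < (t : ℕ) → c j (z i) = h (z i)) ∧
          c t (z i) ≠ h (z i)} : ℝ)) :
    (Set.ncard {i : Fin n | x i ∉ {a : X | ∀ j, c j a = h a}} : ℝ) / n ≤ 1 / Λ := by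
  have hrejected : Λ * (Set.ncard {i : Fin n | x i ∉ {a : X | ∀ j, c j a = h a}} : ℝ) ≤ n := by
    simpa using mul_ncard_not_forall_le_card hΛ.le (fun t i => c t (x i) = h (x i))
      (fun t i => c t (z i) = h (z i)) hstep
  refine div_le_of_le_mul₀ n.cast_nonneg (one_div_nonneg.mpr hΛ.le) ?_
  rwa [one_div_mul_eq_div, le_div_iff₀' hΛ]
end

section
/- Let C be a class of binary classifiers on a set X, let n ∈ ℕ, ε ≥ 0, Λ ≥ 0, let x, x̃ ∈ X^n and y, ỹ ∈ {0,1}^n, and let f ∈ C. Suppose h ∈ C satisfies err(h(x), y) ≤ err(f(x), y) (as holds when h minimizes empirical error over C on (x,y)), and suppose S ⊆ X satisfies the Rejectron stopping condition: for every c ∈ C, err_{x̃}(h|_S, c) − Λ·err_x(h, c) ≤ ε. Then err(h|_S(x̃), ỹ) ≤ ε + 2Λ·err(f(x), y) + err(f(x̃), ỹ). -/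
/-!
Apply the stopping condition to `c = f`. Disagreement counts obey the triangle inequality, so on `x̃` the
errors of `h` inside `S` are at most its disagreements with `f` inside `S` plus the errors of
`f`, while on `x` the disagreements of `h` and `f` are at most `err(h) + err(f) ≤ 2 err(f)`.
-/

section Disagreement

variable {ι α : Type*} [Finite ι]

theorem ncard_and_ne_le_add (p : ι → Prop) (a b c : ι → α) :
    {i | p i ∧ a i ≠ c i}.ncard ≤ {i | p i ∧ a i ≠ b i}.ncard + {i | b i ≠ c i}.ncard := by
  have hsub : {i | p i ∧ a i ≠ c i} ⊆ {i | p i ∧ a i ≠ b i} ∪ {i | b i ≠ c i} := by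
    rintro i ⟨hp, hac⟩
    by_cases hab : a i = b i
    · exact Or.inr fun hbc => hac (hab.trans hbc)
    · exact Or.inl ⟨hp, hab⟩
  exact (Set.ncard_le_ncard hsub).trans (Set.ncard_union_le _ _)

theorem ncard_ne_le_add (a b c : ι → α) :
    {i | a i ≠ c i}.ncard ≤ {i | a i ≠ b i}.ncard + {i | b i ≠ c i}.ncard := by
  simpa using ncard_and_ne_le_add (fun _ => True) a b c

end Disagreement

theorem div_le_div_add_div_of_le {a b c : ℕ} (h : a ≤ b + c) (n : ℝ) (hn : 0 ≤ n) :
    (a : ℝ) / n ≤ b / n + c / n := by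
  rw [← add_div]
  gcongr
  exact_mod_cast h

theorem stmt13_general {X : Type*} (C : Set (X → Bool)) (n : ℕ) (ε Λ : ℝ)
    (hΛ : 0 ≤ Λ)
    (x xt : Fin n → X) (y yt : Fin n → Bool)
    (f : X → Bool) (hf : f ∈ C) (h : X → Bool)
    (hERM : (Set.ncard {i : Fin n | h (x i) ≠ y i} : ℝ) / n ≤
            (Set.ncard {i : Fin n | f (x i) ≠ y i} : ℝ) / n)
    (S : Set X)
    (hstop : ∀ c ∈ C,
      (Set.ncard {i : Fin n | h (xt i) ≠ c (xt i) ∧ xt i ∈ S} : ℝ) / n -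
        Λ * ((Set.ncard {i : Fin n | h (x i) ≠ c (x i)} : ℝ) / n) ≤ ε) :
    (Set.ncard {i : Fin n | xt i ∈ S ∧ h (xt i) ≠ yt i} : ℝ) / n ≤
      ε + 2 * Λ * ((Set.ncard {i : Fin n | f (x i) ≠ y i} : ℝ) / n) +
        (Set.ncard {i : Fin n | f (xt i) ≠ yt i} : ℝ) / n := by
  have hn : (0 : ℝ) ≤ n := n.cast_nonneg
  have hdisagree : (Set.ncard {i : Fin n | h (x i) ≠ f (x i)} : ℝ) / n ≤
      2 * ((Set.ncard {i : Fin n | f (x i) ≠ y i} : ℝ) / n) := by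
    have htri := ncard_ne_le_add (h ∘ x) y (f ∘ x)
    simp only [Function.comp_apply, ne_comm (a := y _)] at htri
    linarith [div_le_div_add_div_of_le htri n hn]
  have hrejected : (Set.ncard {i : Fin n | xt i ∈ S ∧ h (xt i) ≠ yt i} : ℝ) / n ≤
      (Set.ncard {i : Fin n | h (xt i) ≠ f (xt i) ∧ xt i ∈ S} : ℝ) / n +
        (Set.ncard {i : Fin n | f (xt i) ≠ yt i} : ℝ) / n := by
    have htri := ncard_and_ne_le_add (fun i => xt i ∈ S) (h ∘ xt) (f ∘ xt) yt
    simp only [Function.comp_apply, and_comm (a := xt _ ∈ S) (b := h (xt _) ≠ f (xt _))] at htri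
    exact div_le_div_add_div_of_le htri n hn
  have hscaled := mul_le_mul_of_nonneg_left hdisagree hΛ
  linarith [hstop f hf]

/-- if `h ∈ C` has empirical error on `(x,y)` no larger than `f ∈ C`,
and `S` satisfies the Rejectron stopping condition
`err_{x̃}(h|_S, c) − Λ·err_x(h, c) ≤ ε` for every `c ∈ C`, then
`err(h|_S(x̃), ỹ) ≤ ε + 2Λ·err(f(x), y) + err(f(x̃), ỹ)`. -/
theorem stmt13 {X : Type*} (C : Set (X → Bool)) (n : ℕ) (ε Λ : ℝ)
    (hε : 0 ≤ ε) (hΛ : 0 ≤ Λ)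
    (x xt : Fin n → X) (y yt : Fin n → Bool)
    (f : X → Bool) (hf : f ∈ C) (h : X → Bool) (hh : h ∈ C)
    (hERM : (Set.ncard {i : Fin n | h (x i) ≠ y i} : ℝ) / n ≤
            (Set.ncard {i : Fin n | f (x i) ≠ y i} : ℝ) / n)
    (S : Set X)
    (hstop : ∀ c ∈ C,
      (Set.ncard {i : Fin n | h (xt i) ≠ c (xt i) ∧ xt i ∈ S} : ℝ) / n -
        Λ * ((Set.ncard {i : Fin n | h (x i) ≠ c (x i)} : ℝ) / n) ≤ ε) :
    (Set.ncard {i : Fin n | xt i ∈ S ∧ h (xt i) ≠ yt i} : ℝ) / n ≤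
      ε + 2 * Λ * ((Set.ncard {i : Fin n | f (x i) ≠ y i} : ℝ) / n) +
        (Set.ncard {i : Fin n | f (xt i) ≠ yt i} : ℝ) / n :=
  stmt13_general C n ε Λ hΛ x xt y yt f hf h hERM S hstop
end

section
/- There exists a class C of binary classifiers on X = ℕ of VC dimension 1 such that for every η, η̃ ∈ [0, 1/2], every n ≥ 1, and every selective classification algorithm L : X^n × {0,1}^n × X^n → (classifier on X) × (subsets of X), there exist probability distributions μ and μ̃ on X × {0,1} and a classifier f ∈ C with err_μ(f) ≤ η and err_{μ̃}(f) ≤ η̃, such that E_{(x,y)∼μ^n, (x̃,ỹ)∼μ̃^n}[ err_{μ̃}(h|_S) + rej_μ(S) ] ≥ max{ √(η/8), η̃ }, where (h, S) = L(x, y, x̃). -/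
/-!
Each term of the maximum comes from its own instance. For `η̃`: all training mass sits on one
point `x₀` labeled `true`, and the test label of `x₀` is flipped with probability `η̃ ≤ 1/2`; a
selective classifier either accepts `x₀` and errs with test probability at least `η̃`, or rejects
it and has rejection rate `1`.

For `√(η/8)`, put `s = √(η/8)` and `k ≈ 1/s`. Training puts mass `s` uniformly on
`I = {1, …, k}`, all labeled `true`; the test points are uniform on `I`, labeled by `allBut j`
(the classifier that is false only at `j`) for some `j ∈ I`. Neither sample reveals `j`, so the
expected risk averaged over `j ∈ I` is at least the minimum over `(h, S)` of the averaged risk.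
Accepting a point of `I` adds at least `1/k²` to that average (it has test mass `1/k`, and some
`allBut j` disagrees with `h` there), rejecting it adds its training mass `s/k`. As `s ≤ 1/k`,
each of the `k` points adds at least `s/k`, so some `j` gives expected risk at least `s`, while
`allBut j` has training error `s/k ≤ η`.
-/

open MeasureTheory

open ProbabilityTheory Finset
open scoped ENNReal

noncomputable section

def allBut (j : ℕ) : ℕ → Bool := fun x => decide (x ≠ j)

@[simp]
lemma allBut_eq_false_iff {j x : ℕ} : allBut j x = false ↔ x = j := by
  simp [allBut]

@[simp]
lemma allBut_eq_true_iff {j x : ℕ} : allBut j x = true ↔ x ≠ j := by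
  simp [allBut]

def allButClass : Set (ℕ → Bool) := insert (fun _ => true) (Set.range allBut)

lemma vcDim_allButClass : VCDim allButClass 1 := by
  refine ⟨⟨{0}, rfl, fun b => ?_⟩, fun A hA => ?_⟩
  · cases hb : b 0
    · exact ⟨allBut 0, Or.inr ⟨0, rfl⟩, by simp [hb]⟩
    · exact ⟨fun _ => true, Or.inl rfl, by simp [hb]⟩
  · -- no member of the class labels two points `false`
    by_contra! hcard
    obtain ⟨a, ha, b, hb, hab⟩ := Finset.one_lt_card.mp hcard
    obtain ⟨g, rfl | ⟨j, rfl⟩, hgA⟩ := hA fun _ => false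
    · simpa using hgA a ha
    · have haj : a = j := by simpa using hgA a ha
      have hbj : b = j := by simpa using hgA b hb
      exact hab (haj.trans hbj.symm)

section Mix

variable {α : Type*} [MeasurableSpace α]

def mix (s : ℝ) (ν₁ ν₂ : Measure α) : Measure α :=
  ENNReal.ofReal (1 - s) • ν₁ + ENNReal.ofReal s • ν₂

lemma isProbabilityMeasure_mix {s : ℝ} (hs0 : 0 ≤ s) (hs1 : s ≤ 1) (ν₁ ν₂ : Measure α)
    [IsProbabilityMeasure ν₁] [IsProbabilityMeasure ν₂] :
    IsProbabilityMeasure (mix s ν₁ ν₂) := by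
  constructor
  simp [mix, ← ENNReal.ofReal_add (sub_nonneg.2 hs1) hs0]

lemma mix_apply_toReal {s : ℝ} (hs0 : 0 ≤ s) (hs1 : s ≤ 1) (ν₁ ν₂ : Measure α)
    [IsFiniteMeasure ν₁] [IsFiniteMeasure ν₂] (E : Set α) :
    (mix s ν₁ ν₂ E).toReal = (1 - s) * (ν₁ E).toReal + s * (ν₂ E).toReal := by
  simp [mix, ENNReal.toReal_add, ENNReal.mul_ne_top, measure_ne_top, hs0, sub_nonneg.2 hs1]

end Mix

section Labeled

variable {X : Type*} [MeasurableSpace X]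

def labeled (ν : Measure X) (f : X → Bool) : Measure (X × Bool) :=
  ν.map fun x => (x, f x)

def err (μ : Measure (X × Bool)) (f : X → Bool) : ℝ :=
  (μ {p | f p.1 ≠ p.2}).toReal

variable [Countable X] [MeasurableSingletonClass X]

instance (ν : Measure X) [IsProbabilityMeasure ν] (f : X → Bool) :
    IsProbabilityMeasure (labeled ν f) :=
  Measure.isProbabilityMeasure_map (measurable_of_countable _).aemeasurable

lemma labeled_apply (ν : Measure X) (f : X → Bool) (E : Set (X × Bool)) :
    labeled ν f E = ν {x | (x, f x) ∈ E} :=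
  Measure.map_apply (measurable_of_countable _) (Set.to_countable E).measurableSet

lemma map_fst_labeled (ν : Measure X) (f : X → Bool) : (labeled ν f).map Prod.fst = ν := by
  rw [labeled, Measure.map_map measurable_fst (measurable_of_countable _)]
  exact Measure.map_id

lemma err_labeled (ν : Measure X) (f g : X → Bool) :
    err (labeled ν f) g = (ν {x | g x ≠ f x}).toReal := by
  rw [err, labeled_apply]
  rfl

lemma err_labeled_self (ν : Measure X) (f : X → Bool) : err (labeled ν f) f = 0 := by
  simp [err_labeled]

end Labeled

section SelectiveRisk

variable {X : Type*} [MeasurableSpace X]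

def selectiveRisk (μ μt : Measure (X × Bool)) (hS : (X → Bool) × Set X) : ℝ :=
  (μt {p | hS.1 p.1 ≠ p.2 ∧ p.1 ∈ hS.2}).toReal + (μ {p | p.1 ∉ hS.2}).toReal

def expectedSelectiveRisk {n : ℕ} (μ μt : Measure (X × Bool))
    (L : (Fin n → X) → (Fin n → Bool) → (Fin n → X) → (X → Bool) × Set X) : ℝ :=
  ∫ ω : (Fin n → X × Bool) × (Fin n → X × Bool),
    selectiveRisk μ μt (L (fun i => (ω.1 i).1) (fun i => (ω.1 i).2) (fun i => (ω.2 i).1))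
    ∂((Measure.pi fun _ : Fin n => μ).prod (Measure.pi fun _ : Fin n => μt))

lemma selectiveRisk_nonneg (μ μt : Measure (X × Bool)) (hS : (X → Bool) × Set X) :
    0 ≤ selectiveRisk μ μt hS := by
  unfold selectiveRisk
  positivity

lemma selectiveRisk_le_two (μ μt : Measure (X × Bool)) [IsProbabilityMeasure μ]
    [IsProbabilityMeasure μt] (hS : (X → Bool) × Set X) : selectiveRisk μ μt hS ≤ 2 := by
  have h1 := ENNReal.toReal_mono ENNReal.one_ne_top (prob_le_one (μ := μ) (s := {p | p.1 ∉ hS.2}))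
  have h2 := ENNReal.toReal_mono ENNReal.one_ne_top
    (prob_le_one (μ := μt) (s := {p | hS.1 p.1 ≠ p.2 ∧ p.1 ∈ hS.2}))
  simp only [ENNReal.toReal_one] at h1 h2
  unfold selectiveRisk
  linarith

lemma integrable_selectiveRisk_comp {Ω : Type*} [MeasurableSpace Ω] [Countable Ω]
    [MeasurableSingletonClass Ω] (P : Measure Ω) [IsFiniteMeasure P] (μ μt : Measure (X × Bool))
    [IsProbabilityMeasure μ] [IsProbabilityMeasure μt] (g : Ω → (X → Bool) × Set X) :
    Integrable (fun ω => selectiveRisk μ μt (g ω)) P :=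
  .of_bound (measurable_of_countable _).aestronglyMeasurable 2 <| ae_of_all _ fun ω => by
    rw [Real.norm_of_nonneg (selectiveRisk_nonneg ..)]
    exact selectiveRisk_le_two ..

variable [Countable X] [MeasurableSingletonClass X]

lemma selectiveRisk_labeled (ν νt : Measure X) (f ft : X → Bool) (h : X → Bool) (S : Set X) :
    selectiveRisk (labeled ν f) (labeled νt ft) (h, S) =
      (νt {x | h x ≠ ft x ∧ x ∈ S}).toReal + (ν Sᶜ).toReal := by
  simp only [selectiveRisk, labeled_apply]
  rfl

lemma le_expectedSelectiveRisk {n : ℕ} (μ μt : Measure (X × Bool)) [IsProbabilityMeasure μ]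
    [IsProbabilityMeasure μt] {c : ℝ} (hc : ∀ hS, c ≤ selectiveRisk μ μt hS)
    (L : (Fin n → X) → (Fin n → Bool) → (Fin n → X) → (X → Bool) × Set X) :
    c ≤ expectedSelectiveRisk μ μt L := by
  rw [expectedSelectiveRisk]
  calc c = ∫ _ω, c ∂((Measure.pi fun _ : Fin n => μ).prod (Measure.pi fun _ : Fin n => μt)) := by
        simp
    _ ≤ _ := integral_mono (integrable_const c) (integrable_selectiveRisk_comp _ μ μt _)
        fun ω => hc _

lemma expectedSelectiveRisk_eq_integral_map_fst {n : ℕ} (μ μt : Measure (X × Bool))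
    [IsProbabilityMeasure μ] [IsProbabilityMeasure μt]
    (L : (Fin n → X) → (Fin n → Bool) → (Fin n → X) → (X → Bool) × Set X) :
    expectedSelectiveRisk μ μt L =
      ∫ w : (Fin n → X × Bool) × (Fin n → X),
        selectiveRisk μ μt (L (fun i => (w.1 i).1) (fun i => (w.1 i).2) w.2)
        ∂((Measure.pi fun _ : Fin n => μ).prod (Measure.pi fun _ : Fin n => μt.map Prod.fst)) := by
  have := Measure.isProbabilityMeasure_map (μ := μt) measurable_fst.aemeasurable
  have hmp : MeasurePreserving (Prod.map id fun z i => (z i).1)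
      ((Measure.pi fun _ : Fin n => μ).prod (Measure.pi fun _ : Fin n => μt))
      ((Measure.pi fun _ : Fin n => μ).prod (Measure.pi fun _ : Fin n => μt.map Prod.fst)) :=
    (MeasurePreserving.id _).prod <| measurePreserving_pi _ _ fun _ => ⟨measurable_fst, rfl⟩
  rw [← hmp.map_eq, integral_map hmp.measurable.aemeasurable
    (measurable_of_countable _).aestronglyMeasurable]
  rfl

lemma exists_le_expectedSelectiveRisk_of_le_sum {ι : Type*} {J : Finset ι} (hJ : J.Nonempty)
    (μ : Measure (X × Bool)) [IsProbabilityMeasure μ] (μt : ι → Measure (X × Bool))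
    [∀ j, IsProbabilityMeasure (μt j)] (ν : Measure X) (hν : ∀ j ∈ J, (μt j).map Prod.fst = ν)
    {c : ℝ} (hc : ∀ hS, #J * c ≤ ∑ j ∈ J, selectiveRisk μ (μt j) hS) {n : ℕ}
    (L : (Fin n → X) → (Fin n → Bool) → (Fin n → X) → (X → Bool) × Set X) :
    ∃ j ∈ J, c ≤ expectedSelectiveRisk μ (μt j) L := by
  obtain ⟨j₀, hj₀⟩ := hJ
  have : IsProbabilityMeasure ν :=
    hν j₀ hj₀ ▸ Measure.isProbabilityMeasure_map measurable_fst.aemeasurable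
  refine exists_le_of_sum_le ⟨j₀, hj₀⟩ ?_
  let P := (Measure.pi fun _ : Fin n => μ).prod (Measure.pi fun _ : Fin n => ν)
  let g (w : (Fin n → X × Bool) × (Fin n → X)) := L (fun i => (w.1 i).1) (fun i => (w.1 i).2) w.2
  calc ∑ _j ∈ J, c = ∫ _w, (#J * c) ∂P := by simp
    _ ≤ ∫ w, ∑ j ∈ J, selectiveRisk μ (μt j) (g w) ∂P :=
      integral_mono (integrable_const _)
        (integrable_finsetSum _ fun j _ => integrable_selectiveRisk_comp P μ (μt j) g)
        fun w => hc (g w)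
    _ = ∑ j ∈ J, expectedSelectiveRisk μ (μt j) L := by
      rw [integral_finsetSum _ fun j _ => integrable_selectiveRisk_comp P μ (μt j) g]
      refine sum_congr rfl fun j hj => ?_
      rw [expectedSelectiveRisk_eq_integral_map_fst, hν j hj]

end SelectiveRisk

lemma le_selectiveRisk_flip {X : Type*} [MeasurableSpace X] [MeasurableSingletonClass X] (x₀ : X)
    {η : ℝ} (hη0 : 0 ≤ η) (hη : η ≤ 1 / 2) (hS : (X → Bool) × Set X) :
    η ≤ selectiveRisk (Measure.dirac (x₀, true))
      (mix η (Measure.dirac (x₀, true)) (Measure.dirac (x₀, false))) hS := by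
  obtain ⟨h, S⟩ := hS
  rw [selectiveRisk, mix_apply_toReal hη0 (by linarith)]
  by_cases hx : x₀ ∈ S
  · cases hh : h x₀
    · simp [Measure.dirac_apply, hh, hx]
      linarith
    · simp [Measure.dirac_apply, hh, hx]
  · simp [Measure.dirac_apply, hx]
    linarith

lemma uniformOn_finset_apply_toReal {α : Type*} [MeasurableSpace α] [MeasurableSingletonClass α]
    (I : Finset α) (E : Set α) [DecidablePred (· ∈ E)] :
    (uniformOn (I : Set α) E).toReal = #{x ∈ I | x ∈ E} / #I := by
  classical
  rw [← uniformOn_inter_self I.finite_toSet, show (I : Set α) ∩ E = ↑{x ∈ I | x ∈ E} by ext; simp,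
    uniformOn_apply_finset, ENNReal.toReal_div, inter_eq_right.2 (filter_subset _ _)]
  simp

lemma card_filter_le_sum_card_filter_allBut_ne {I : Finset ℕ} (hI : 2 ≤ #I) (h : ℕ → Bool)
    (S : Set ℕ) [DecidablePred (· ∈ S)] :
    #{x ∈ I | x ∈ S} ≤ ∑ j ∈ I, #{x ∈ I | h x ≠ allBut j x ∧ x ∈ S} := by
  have hmiss : ∀ x ∈ I, ∃ j ∈ I, h x ≠ allBut j x := by
    intro x hx
    cases hhx : h x
    · obtain ⟨j, hj, hjx⟩ := exists_mem_ne hI x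
      exact ⟨j, hj, by simp [hjx.symm]⟩
    · exact ⟨x, hx, by simp⟩
  simp only [card_filter]
  rw [sum_comm]
  refine sum_le_sum fun x hx => ?_
  split_ifs with hxS
  · obtain ⟨j, hj, hne⟩ := hmiss x hx
    exact le_trans (by simp [hne, hxS])
      (single_le_sum (f := fun j => if h x ≠ allBut j x ∧ x ∈ S then 1 else 0)
        (fun _ _ => Nat.zero_le _) hj)
  · exact Nat.zero_le _

def trainMeasure (I : Finset ℕ) (s : ℝ) : Measure (ℕ × Bool) :=
  labeled (mix s (Measure.dirac 0) (uniformOn (I : Set ℕ))) fun _ => true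

def testMeasure (I : Finset ℕ) (j : ℕ) : Measure (ℕ × Bool) :=
  labeled (uniformOn (I : Set ℕ)) (allBut j)

lemma card_mul_le_sum_selectiveRisk {I : Finset ℕ} (hI : 2 ≤ #I) {s : ℝ} (hs0 : 0 ≤ s)
    (hsI : s * #I ≤ 1) (hS : (ℕ → Bool) × Set ℕ) :
    #I * s ≤ ∑ j ∈ I, selectiveRisk (trainMeasure I s) (testMeasure I j) hS := by
  classical
  obtain ⟨h, S⟩ := hS
  have hIpos : (0 : ℝ) < #I := by norm_cast; omega
  have hs1 : s ≤ 1 := le_trans (le_mul_of_one_le_right hs0 (by norm_cast; omega)) hsI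
  have hacc : (#{x ∈ I | x ∈ S} : ℝ) / #I ≤
      ∑ j ∈ I, (uniformOn (I : Set ℕ) {x | h x ≠ allBut j x ∧ x ∈ S}).toReal := by
    simp only [uniformOn_finset_apply_toReal, ← sum_div, Set.mem_ofPred_eq]
    gcongr
    exact_mod_cast card_filter_le_sum_card_filter_allBut_ne hI h S
  have hrej : s * #{x ∈ I | x ∉ S} / #I ≤
      (mix s (Measure.dirac 0) (uniformOn (I : Set ℕ)) Sᶜ).toReal := by
    rw [mix_apply_toReal hs0 hs1, uniformOn_finset_apply_toReal]
    have : 0 ≤ (1 - s) * (Measure.dirac 0 Sᶜ).toReal :=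
      mul_nonneg (by linarith) ENNReal.toReal_nonneg
    simp only [Set.mem_compl_iff]
    linarith [mul_div_assoc s (#{x ∈ I | x ∉ S} : ℝ) #I]
  have hsplit : (#{x ∈ I | x ∈ S} : ℝ) + #{x ∈ I | x ∉ S} = #I := by
    exact_mod_cast card_filter_add_card_filter_not (s := I) (· ∈ S)
  have hsacc : s * #{x ∈ I | x ∈ S} ≤ (#{x ∈ I | x ∈ S} : ℝ) / #I := by
    rw [le_div_iff₀ hIpos, mul_right_comm]
    exact mul_le_of_le_one_left (Nat.cast_nonneg _) hsI
  have hsrej : (#I : ℝ) * (s * #{x ∈ I | x ∉ S} / #I) = s * #{x ∈ I | x ∉ S} := by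
    field_simp
  have hrejI := mul_le_mul_of_nonneg_left hrej hIpos.le
  have hsplit' : (#I : ℝ) * s = s * #{x ∈ I | x ∈ S} + s * #{x ∈ I | x ∉ S} := by
    rw [← hsplit]; ring
  simp only [trainMeasure, testMeasure, selectiveRisk_labeled, sum_add_distrib, sum_const,
    nsmul_eq_mul]
  linarith

lemma err_trainMeasure_allBut {I : Finset ℕ} (hI0 : 0 ∉ I) {s : ℝ} (hs0 : 0 ≤ s) (hs1 : s ≤ 1)
    {j : ℕ} (hj : j ∈ I) : err (trainMeasure I s) (allBut j) = s / #I := by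
  classical
  have hj0 : j ≠ 0 := fun h => hI0 (h ▸ hj)
  rw [trainMeasure, err_labeled, mix_apply_toReal hs0 hs1, uniformOn_finset_apply_toReal]
  simp [hj0.symm, filter_eq', hj, div_eq_mul_inv]

lemma exists_le_expectedSelectiveRisk_allBut {I : Finset ℕ} (hI : 2 ≤ #I) (hI0 : 0 ∉ I) {s : ℝ}
    (hs0 : 0 ≤ s) (hsI : s * #I ≤ 1) {n : ℕ}
    (L : (Fin n → ℕ) → (Fin n → Bool) → (Fin n → ℕ) → (ℕ → Bool) × Set ℕ) :
    ∃ j ∈ I, IsProbabilityMeasure (trainMeasure I s) ∧ IsProbabilityMeasure (testMeasure I j) ∧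
      err (trainMeasure I s) (allBut j) = s / #I ∧ err (testMeasure I j) (allBut j) = 0 ∧
      s ≤ expectedSelectiveRisk (trainMeasure I s) (testMeasure I j) L := by
  have hIne : I.Nonempty := card_pos.1 (by omega)
  have hs1 : s ≤ 1 := le_trans (le_mul_of_one_le_right hs0 (by norm_cast; omega)) hsI
  have := isProbabilityMeasure_uniformOn I.finite_toSet (coe_nonempty.2 hIne)
  have := isProbabilityMeasure_mix hs0 hs1 (Measure.dirac 0) (uniformOn (I : Set ℕ))
  have htrain : IsProbabilityMeasure (trainMeasure I s) := by unfold trainMeasure; infer_instance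
  have htest (j : ℕ) : IsProbabilityMeasure (testMeasure I j) := by
    unfold testMeasure; infer_instance
  obtain ⟨j, hj, hrisk⟩ := exists_le_expectedSelectiveRisk_of_le_sum hIne (trainMeasure I s)
    (testMeasure I) (uniformOn (I : Set ℕ)) (fun j _ => map_fst_labeled _ _)
    (card_mul_le_sum_selectiveRisk hI hs0 hsI) L
  exact ⟨j, hj, htrain, htest j,
    err_trainMeasure_allBut hI0 hs0 hs1 hj, err_labeled_self _ _, hrisk⟩

lemma exists_two_le_nat_mul_mem_Icc {s : ℝ} (hs0 : 0 < s) (hs : s ≤ 1 / 4) :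
    ∃ k : ℕ, 2 ≤ k ∧ s * k ∈ Set.Icc (1 / 8) 1 := by
  refine ⟨⌊1 / s⌋₊, ?_, ?_, ?_⟩
  · have : (2 : ℝ) ≤ 1 / s := by rw [le_div_iff₀ hs0]; linarith
    exact Nat.le_floor (by exact_mod_cast this)
  · have h := Nat.sub_one_lt_floor (1 / s)
    have : s * (1 / s - 1) = 1 - s := by field_simp
    nlinarith
  · calc s * ⌊1 / s⌋₊ ≤ s * (1 / s) := by gcongr; exact Nat.floor_le (by positivity)
      _ = 1 := by field_simp

/-- semi-agnostic lower bound: there exists a class `C` on `ℕ` of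
VC dimension 1 such that for every `η, η̃ ∈ [0, 1/2]`, every `n ≥ 1`, and every
selective classification algorithm `L`, there exist distributions `μ`, `μ̃` on
`ℕ × {0,1}` and `f ∈ C` with `err_μ(f) ≤ η` and `err_{μ̃}(f) ≤ η̃`, such that
`E_{(x,y)∼μⁿ, (x̃,ỹ)∼μ̃ⁿ}[err_{μ̃}(h|_S) + rej_μ(S)] ≥ max{√(η/8), η̃}`, where
`(h, S) = L(x, y, x̃)`. -/
theorem stmt19 : ∃ C : Set (ℕ → Bool), VCDim C 1 ∧
    ∀ η ηt : ℝ, 0 ≤ η → η ≤ 1 / 2 → 0 ≤ ηt → ηt ≤ 1 / 2 →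
    ∀ n : ℕ, 1 ≤ n →
    ∀ L : (Fin n → ℕ) → (Fin n → Bool) → (Fin n → ℕ) → (ℕ → Bool) × Set ℕ,
    ∃ μ μt : Measure (ℕ × Bool), IsProbabilityMeasure μ ∧ IsProbabilityMeasure μt ∧
    ∃ f ∈ C,
      (μ {p : ℕ × Bool | f p.1 ≠ p.2}).toReal ≤ η ∧
      (μt {p : ℕ × Bool | f p.1 ≠ p.2}).toReal ≤ ηt ∧
      max (Real.sqrt (η / 8)) ηt ≤
        ∫ ω : (Fin n → ℕ × Bool) × (Fin n → ℕ × Bool),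
          (fun hS : (ℕ → Bool) × Set ℕ =>
            (μt {p : ℕ × Bool | hS.1 p.1 ≠ p.2 ∧ p.1 ∈ hS.2}).toReal +
            (μ {p : ℕ × Bool | p.1 ∉ hS.2}).toReal)
            (L (fun i => (ω.1 i).1) (fun i => (ω.1 i).2) (fun i => (ω.2 i).1))
          ∂((Measure.pi fun _ : Fin n => μ).prod (Measure.pi fun _ : Fin n => μt)) := by
  refine ⟨allButClass, vcDim_allButClass, fun η ηt hη0 hη ηt0 hηt n _ L => ?_⟩
  rcases le_or_gt √(η / 8) ηt with hle | hlt
  · have := isProbabilityMeasure_mix ηt0 (by linarith)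
      (Measure.dirac ((0 : ℕ), true)) (Measure.dirac (0, false))
    have hrisk := le_expectedSelectiveRisk _ _ (le_selectiveRisk_flip 0 ηt0 hηt) L
    refine ⟨_, _, inferInstance, this, fun _ => true, Set.mem_insert _ _, ?_, ?_,
      max_le (hle.trans hrisk) hrisk⟩
    · simpa [Measure.dirac_apply] using hη0
    · simp [mix_apply_toReal ηt0 (by linarith : ηt ≤ 1), Measure.dirac_apply]
  · set s := √(η / 8)
    have hs0 : 0 < s := ηt0.trans_lt hlt
    have hη8 : η = 8 * s ^ 2 := by rw [Real.sq_sqrt (by positivity)]; ring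
    obtain ⟨k, hk2, hsk8, hsk1⟩ := exists_two_le_nat_mul_mem_Icc hs0 (by nlinarith)
    have hI : #(Icc 1 k) = k := by simp
    obtain ⟨j, hj, hμ, hμt, herr, herrt, hrisk⟩ := exists_le_expectedSelectiveRisk_allBut
      (I := Icc 1 k) (hI.symm ▸ hk2) (by simp) hs0.le (hI.symm ▸ hsk1) L
    refine ⟨_, _, hμ, hμt, allBut j, Set.mem_insert_of_mem _ ⟨j, rfl⟩,
      herr.trans_le ?_, herrt.trans_le ηt0, max_le hrisk (hlt.le.trans hrisk)⟩
    rw [hI, div_le_iff₀ (by positivity)]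
    nlinarith
end
end
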